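/- arXiv:1907.13514 — 5 statements merged into one kernel-verified Lean document; each statement's English description precedes it below -/
import Mathlib

section
/- (Maximum principle) Let G=(V,q) be a graph, S ⊆ V a finite subset, and T>0. Suppose u:[0,T]×V→ℝ is such that t ↦ u_t(x) is differentiable for each x ∈ S and satisfies the heat inequality ∂_t u_t(x) ≤ Δu_t(x) for all x ∈ S and all t ∈ [0,T]. Then max_{(x,t)∈S×[0,T]} u_t(x) ≤ sup_{(x,t)∈((V∖S)×[0,T])∪(V×{0})} u_t(x), where the right-hand side is interpreted in the extended reals. -/
/-!
Perturb `u` to `u_t(x) - ε t`, which satisfies the heat inequality strictly. At a maximum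
`(t₁, x₁)` of the perturbed function over `[0, T] × S` lying above the boundary values, the
Laplacian is `≤ 0` (every neighbour has a smaller value), while `t₁ > 0` and maximality in time
give a non-negative time derivative, contradicting the strict inequality. Letting `ε → 0` gives
the bound for `u`.
-/

open scoped BigOperators Classical

namespace OllivierGraph

variable {V : Type*}

/-- A graph structure on `V`: non-negative edge weights with finitely many
neighbours for every vertex. -/
def IsGraph (q : V → V → ℝ) : Prop :=
  (∀ x y, 0 ≤ q x y) ∧ ∀ x, {y | 0 < q x y}.Finite

/-- `m` is an invariant measure for `q`, i.e. `q` is reversible w.r.t. `m`. -/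
def IsInvariantMeasure (q : V → V → ℝ) (m : V → ℝ) : Prop :=
  (∀ x, 0 < m x) ∧ ∀ x y, q x y * m x = q y x * m y

/-- Reversibility (undirectedness) of the graph. -/
def IsReversible (q : V → V → ℝ) : Prop :=
  ∃ m : V → ℝ, IsInvariantMeasure q m

/-- The graph Laplacian `Δ f (x) = Σ_y q(x,y)(f(y) - f(x))`. -/
noncomputable def lap (q : V → V → ℝ) (f : V → ℝ) (x : V) : ℝ :=
  ∑' y, q x y * (f y - f x)

/-- The set of lengths of walks from `x` to `y`. -/
def walkLens (q : V → V → ℝ) (x y : V) : Set ℕ :=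
  {n | ∃ p : ℕ → V, p 0 = x ∧ p n = y ∧ ∀ i < n, 0 < q (p i) (p (i + 1))}

/-- The combinatorial distance. -/
noncomputable def gdist (q : V → V → ℝ) (x y : V) : ℕ :=
  sInf (walkLens q x y)

/-- Connectedness: every two vertices are joined by some walk. -/
def GConnected (q : V → V → ℝ) : Prop :=
  ∀ x y : V, (walkLens q x y).Nonempty

/-- `q_min`: the infimum of the positive edge weights. -/
noncomputable def qmin (q : V → V → ℝ) : ℝ :=
  sInf {c : ℝ | 0 < c ∧ ∃ x y, q x y = c}

/-- Boundedness of a real valued function. -/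
def IsBoundedFun (f : V → ℝ) : Prop := ∃ C, ∀ x, |f x| ≤ C

/-- Supremum norm. -/
noncomputable def supNorm (f : V → ℝ) : ℝ := ⨆ x, |f x|

/-- `∇_{xy} f = (f(x) - f(y)) / d(x,y)`. -/
noncomputable def gradxy (q : V → V → ℝ) (f : V → ℝ) (x y : V) : ℝ :=
  (f x - f y) / (gdist q x y : ℝ)

/-- `‖∇ f‖_∞ = sup_{x ≠ y} |∇_{xy} f|`. -/
noncomputable def gradNorm (q : V → V → ℝ) (f : V → ℝ) : ℝ :=
  ⨆ p : {p : V × V // p.1 ≠ p.2}, |gradxy q f p.1.1 p.1.2|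

/-- Ollivier curvature `κ(x,y)`. -/
noncomputable def kappa (q : V → V → ℝ) (x y : V) : ℝ :=
  sInf {c | ∃ f : V → ℝ, gradxy q f y x = 1 ∧ gradNorm q f = 1 ∧
    c = gradxy q (lap q f) x y}

/-- Non-negative Ollivier curvature. -/
def NonnegOllivier (q : V → V → ℝ) : Prop :=
  ∀ x y : V, x ≠ y → 0 ≤ kappa q x y

/-- Transport plan from `x0` to `y0`. -/
def IsTransportPlan (q : V → V → ℝ) (x0 y0 : V) (ρ : V → V → ℝ) : Prop :=
  (∀ x y, 0 ≤ ρ x y) ∧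
  (∀ x, x ≠ x0 → ∑' y, ρ x y = q x0 x) ∧
  (∀ y, y ≠ y0 → ∑' x, ρ x y = q y0 y)

/-- The cost of a transport plan. -/
noncomputable def cost (q : V → V → ℝ) (x0 y0 : V) (ρ : V → V → ℝ) : ℝ :=
  ∑' p : V × V, ρ p.1 p.2 * ((gdist q x0 y0 : ℝ) - (gdist q p.1 p.2 : ℝ))

/-- `μ_ρ(k)`: the mass transported over distance `d(x0,y0) + k`. -/
noncomputable def muRho (q : V → V → ℝ) (x0 y0 : V) (ρ : V → V → ℝ) (k : ℤ) : ℝ :=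
  ∑' p : V × V,
    if (gdist q p.1 p.2 : ℤ) - (gdist q x0 y0 : ℤ) = k then ρ p.1 p.2 else 0

/-- Optimality of a transport plan: it maximizes the cost. -/
def IsOptimalPlan (q : V → V → ℝ) (x0 y0 : V) (ρ : V → V → ℝ) : Prop :=
  IsTransportPlan q x0 y0 ρ ∧
  ∀ σ : V → V → ℝ, IsTransportPlan q x0 y0 σ → cost q x0 y0 σ ≤ cost q x0 y0 ρ

/-- A coupling graph of `q`: a graph on `V × V` whose Laplacian tensorizes. -/
def IsCouplingGraph (q : V → V → ℝ) (qt : V × V → V × V → ℝ) : Prop :=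
  IsGraph qt ∧
  ∀ f : V → ℝ,
    (∀ p : V × V, lap qt (fun r => f r.1) p = lap q f p.1) ∧
    (∀ p : V × V, lap qt (fun r => f r.2) p = lap q f p.2)

/-- A perfect coupling graph. -/
def IsPerfectCoupling (q : V → V → ℝ) (qt : V × V → V × V → ℝ) : Prop :=
  IsCouplingGraph q qt ∧
  ∀ x0 y0 : V,
    IsOptimalPlan q x0 y0 (fun x y => qt (x0, y0) (x, y)) ∧
    (∀ k : ℤ, 1 < |k| → muRho q x0 y0 (fun x y => qt (x0, y0) (x, y)) k = 0) ∧
    (x0 ≠ y0 → 2 * qmin q ≤ muRho q x0 y0 (fun x y => qt (x0, y0) (x, y)) (-1))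

/-- Truncated Laplacian `Δ_S`, corresponding to the rates `q_S(x,y) = q(x,y) 1_S(x)`. -/
noncomputable def lapS (q : V → V → ℝ) (S : Finset V) (f : V → ℝ) (x : V) : ℝ :=
  if x ∈ S then lap q f x else 0

/-- Truncated heat semigroup `P_t^S f = Σ_k t^k Δ_S^k (f · 1_S) / k!`. -/
noncomputable def heatS (q : V → V → ℝ) (S : Finset V) (t : ℝ) (f : V → ℝ) (x : V) : ℝ :=
  ∑' k : ℕ, t ^ k / (Nat.factorial k : ℝ) *
    ((lapS q S)^[k] (fun v => if v ∈ S then f v else 0)) x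

/-- Heat semigroup applied to non-negative functions: supremum of the truncations. -/
noncomputable def heatPos (q : V → V → ℝ) (t : ℝ) (f : V → ℝ) (x : V) : ℝ :=
  ⨆ S : Finset V, heatS q S t f x

/-- Heat semigroup `P_t f := P_t f_+ - P_t f_-`. -/
noncomputable def heat (q : V → V → ℝ) (t : ℝ) (f : V → ℝ) (x : V) : ℝ :=
  heatPos q t (fun v => max (f v) 0) x - heatPos q t (fun v => max (-f v) 0) x

/-- Stochastic completeness: `P_t 1 = 1`. -/
def StochasticallyComplete (q : V → V → ℝ) : Prop :=
  ∀ t : ℝ, 0 ≤ t → ∀ x, heat q t (fun _ => 1) x = 1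

/-- The birth-death chain on `ℕ` with rates `2c` and absorbing state `0`. -/
noncomputable def qBD (c : ℝ) : ℕ → ℕ → ℝ :=
  fun x y => if 0 < x ∧ (x = y + 1 ∨ y = x + 1) then 2 * c else 0

/-- `φ_t(n) = P_t^{ℕ₀} 1_{ℕ₊} (n)`. -/
noncomputable def phiBD (c : ℝ) (t : ℝ) (n : ℕ) : ℝ :=
  heat (qBD c) t (fun k => if 0 < k then 1 else 0) n

/-- `ℓ¹` norm with respect to the measure `m`. -/
noncomputable def l1Norm (m : V → ℝ) (f : V → ℝ) : ℝ := ∑' x, m x * |f x|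

/-- Membership in `ℓ¹(V, m)`. -/
def MemL1 (m : V → ℝ) (f : V → ℝ) : Prop := Summable fun x => m x * |f x|

/-- The `ℓ¹`-Wasserstein distance (via Kantorovich duality). -/
noncomputable def W1 (q : V → V → ℝ) (m : V → ℝ) (μ ν : V → ℝ) : ℝ :=
  sSup {c | ∃ g : V → ℝ, gradNorm q g ≤ 1 ∧ c = ∑' x, m x * (μ x - ν x) * g x}

/-- The Laplacian as a matrix (finite graphs). -/
noncomputable def lapMat [Fintype V] (q : V → V → ℝ) [DecidableEq V] : Matrix V V ℝ :=
  Matrix.of fun x y => q x y - if x = y then ∑ z, q x z else 0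

/-- The heat semigroup `e^{tΔ}` of a finite graph. -/
noncomputable def heatFin [Fintype V] [DecidableEq V] (q : V → V → ℝ) (t : ℝ)
    (f : V → ℝ) : V → ℝ :=
  (NormedSpace.exp (t • lapMat q)).mulVec f

/-- `λ` is an eigenvalue of `-Δ`. -/
def IsLapEigenvalue (q : V → V → ℝ) (lam : ℝ) : Prop :=
  ∃ f : V → ℝ, f ≠ 0 ∧ ∀ x, lap q f x = -lam * f x

/-- Boundary measure `|∂A|` of a set of vertices. -/
noncomputable def boundaryMeasure [Fintype V] [DecidableEq V] (q : V → V → ℝ)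
    (m : V → ℝ) (A : Finset V) : ℝ :=
  ∑ x ∈ A, ∑ y ∈ Aᶜ, m x * q x y

/-- The Cheeger constant of a finite graph. -/
noncomputable def cheeger [Fintype V] [DecidableEq V] (q : V → V → ℝ) (m : V → ℝ) : ℝ :=
  sInf {c | ∃ A : Finset V, 0 < (∑ x ∈ A, m x) ∧ 2 * (∑ x ∈ A, m x) ≤ ∑ x, m x ∧
    c = boundaryMeasure q m A / ∑ x ∈ A, m x}

/-- The diameter of a graph. -/
noncomputable def gdiam (q : V → V → ℝ) : ℝ :=
  ⨆ p : V × V, (gdist q p.1 p.2 : ℝ)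

theorem IsMaxOn.nonneg_of_hasDerivWithinAt_Icc {f : ℝ → ℝ} {f' a b t : ℝ}
    (hmax : IsMaxOn f (Set.Icc a b) t) (hf : HasDerivWithinAt f f' (Set.Icc a b) t)
    (hat : a < t) (htb : t ≤ b) : 0 ≤ f' := by
  have hcone : a - t ∈ posTangentConeAt (Set.Icc a b) t :=
    sub_mem_posTangentConeAt_of_segment_subset <| by
      rw [segment_symm, segment_eq_Icc hat.le]
      exact Set.Icc_subset_Icc le_rfl htb
  have hnonpos := hmax.localize.hasFDerivWithinAt_nonpos hf hcone
  rw [ContinuousLinearMap.toSpanSingleton_apply, smul_eq_mul] at hnonpos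
  exact nonneg_of_mul_nonpos_right hnonpos (sub_neg.2 hat)

theorem exists_forall_le_of_finset_of_isCompact {ι X : Type*} [TopologicalSpace X]
    {s : Finset ι} {K : Set X} (hs : s.Nonempty) (hK : IsCompact K) (hKne : K.Nonempty)
    {f : ι → X → ℝ} (hf : ∀ i ∈ s, ContinuousOn (f i) K) :
    ∃ i ∈ s, ∃ t ∈ K, ∀ j ∈ s, ∀ r ∈ K, f j r ≤ f i t := by
  obtain ⟨t, ht, hmax⟩ := hK.exists_isMaxOn hKne (ContinuousOn.finset_sup'_apply hs hf)
  obtain ⟨i, hi, hit⟩ := s.exists_mem_eq_sup' hs fun j => f j t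
  refine ⟨i, hi, t, ht, fun j hj r hr => ?_⟩
  calc f j r ≤ s.sup' hs (fun j => f j r) := s.le_sup' (fun j => f j r) hj
    _ ≤ s.sup' hs (fun j => f j t) := hmax hr
    _ = f i t := hit

theorem lap_nonpos_of_forall_le {q : V → V → ℝ} {f : V → ℝ} {x : V} (hq : ∀ y, 0 ≤ q x y)
    (hf : ∀ y, f y ≤ f x) : lap q f x ≤ 0 :=
  tsum_nonpos fun y => mul_nonpos_of_nonneg_of_nonpos (hq y) (sub_nonpos.2 (hf y))

theorem lap_sub_const (q : V → V → ℝ) (f : V → ℝ) (c : ℝ) (x : V) :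
    lap q (fun y => f y - c) x = lap q f x := by
  simp only [lap, sub_sub_sub_cancel_right]

section HeatInequality

variable {q : V → V → ℝ} {S : Finset V} {T B : ℝ} {u u' : ℝ → V → ℝ}

theorem le_of_strict_heat_ineq (hq : ∀ x y, 0 ≤ q x y)
    (hderiv : ∀ x ∈ S, ∀ t ∈ Set.Icc (0 : ℝ) T,
      HasDerivWithinAt (fun s => u s x) (u' t x) (Set.Icc (0 : ℝ) T) t)
    (hineq : ∀ x ∈ S, ∀ t ∈ Set.Icc (0 : ℝ) T, u' t x < lap q (u t) x)
    (hbdry : ∀ y ∉ S, ∀ s ∈ Set.Icc (0 : ℝ) T, u s y ≤ B) (hinit : ∀ y, u 0 y ≤ B) :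
    ∀ x ∈ S, ∀ t ∈ Set.Icc (0 : ℝ) T, u t x ≤ B := by
  intro x hx t ht
  obtain ⟨x₁, hx₁, t₁, ht₁, hmax⟩ := exists_forall_le_of_finset_of_isCompact ⟨x, hx⟩
    isCompact_Icc ⟨t, ht⟩ fun y hy s hs => (hderiv y hy s hs).continuousWithinAt
  refine (hmax x hx t ht).trans (not_lt.1 fun hB => ?_)
  have hlap : lap q (u t₁) x₁ ≤ 0 := by
    refine lap_nonpos_of_forall_le (hq x₁) fun y => ?_
    by_cases hy : y ∈ S
    · exact hmax y hy t₁ ht₁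
    · exact (hbdry y hy t₁ ht₁).trans hB.le
  have ht₁pos : 0 < t₁ :=
    ht₁.1.lt_of_ne fun h => (hinit x₁).not_gt (h ▸ hB)
  have hderiv_nonneg : 0 ≤ u' t₁ x₁ :=
    IsMaxOn.nonneg_of_hasDerivWithinAt_Icc (fun s hs => hmax x₁ hx₁ s hs)
      (hderiv x₁ hx₁ t₁ ht₁) ht₁pos ht₁.2
  linarith [hineq x₁ hx₁ t₁ ht₁]

theorem le_of_heat_ineq (hq : ∀ x y, 0 ≤ q x y)
    (hderiv : ∀ x ∈ S, ∀ t ∈ Set.Icc (0 : ℝ) T,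
      HasDerivWithinAt (fun s => u s x) (u' t x) (Set.Icc (0 : ℝ) T) t)
    (hineq : ∀ x ∈ S, ∀ t ∈ Set.Icc (0 : ℝ) T, u' t x ≤ lap q (u t) x)
    (hbdry : ∀ y ∉ S, ∀ s ∈ Set.Icc (0 : ℝ) T, u s y ≤ B) (hinit : ∀ y, u 0 y ≤ B) :
    ∀ x ∈ S, ∀ t ∈ Set.Icc (0 : ℝ) T, u t x ≤ B := by
  intro x hx t ht
  have hperturbed : ∀ ε > 0, u t x - ε * t ≤ B := by
    intro ε hε
    have hlin : ∀ s, HasDerivWithinAt (fun s => ε * s) ε (Set.Icc 0 T) s := fun s => by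
      simpa using (hasDerivWithinAt_id s _).const_mul ε
    refine le_of_strict_heat_ineq (u := fun s y => u s y - ε * s) (u' := fun s y => u' s y - ε)
      hq (fun y hy s hs => (hderiv y hy s hs).sub (hlin s))
      (fun y hy s hs => ?_) (fun y hy s hs => ?_) (fun y => ?_) x hx t ht
    · rw [lap_sub_const]
      linarith [hineq y hy s hs]
    · linarith [hbdry y hy s hs, mul_nonneg hε.le hs.1]
    · simpa using hinit y
  have hcont : Continuous fun ε : ℝ => u t x - ε * t := by fun_prop
  have hlim : Filter.Tendsto (fun ε => u t x - ε * t) (nhdsWithin 0 (Set.Ioi 0))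
      (nhds (u t x)) :=
    (hcont.tendsto' 0 (u t x) (by simp)).mono_left nhdsWithin_le_nhds
  exact le_of_tendsto hlim (eventually_nhdsWithin_of_forall hperturbed)

end HeatInequality

theorem maximum_principle_general
    {V : Type*} (q : V → V → ℝ) (hg : IsGraph q)
    (S : Finset V) (T : ℝ)
    (u u' : ℝ → V → ℝ)
    (hderiv : ∀ x ∈ S, ∀ t ∈ Set.Icc (0 : ℝ) T,
      HasDerivWithinAt (fun s => u s x) (u' t x) (Set.Icc (0 : ℝ) T) t)
    (hineq : ∀ x ∈ S, ∀ t ∈ Set.Icc (0 : ℝ) T, u' t x ≤ lap q (u t) x) :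
    ∀ x ∈ S, ∀ t ∈ Set.Icc (0 : ℝ) T,
      (u t x : EReal) ≤
        ⨆ p ∈ {p : V × ℝ | (p.1 ∉ S ∧ p.2 ∈ Set.Icc (0 : ℝ) T) ∨ p.2 = 0},
          ((u p.2 p.1 : ℝ) : EReal) := by
  intro x hx t ht
  set boundary := {p : V × ℝ | (p.1 ∉ S ∧ p.2 ∈ Set.Icc (0 : ℝ) T) ∨ p.2 = 0}
  have hbound : ∀ p ∈ boundary,
      ((u p.2 p.1 : ℝ) : EReal) ≤ ⨆ p ∈ boundary, ((u p.2 p.1 : ℝ) : EReal) :=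
    fun p hp => le_biSup (fun p : V × ℝ => ((u p.2 p.1 : ℝ) : EReal)) hp
  generalize ⨆ p ∈ boundary, ((u p.2 p.1 : ℝ) : EReal) = M at hbound ⊢
  induction M using EReal.rec with
  | bot => exact absurd (hbound (x, 0) (Or.inr rfl)) (by simp)
  | top => exact le_top
  | coe B =>
    exact_mod_cast le_of_heat_ineq hg.1 hderiv hineq
      (fun y hy s hs => by exact_mod_cast hbound (y, s) (Or.inl ⟨hy, hs⟩))
      (fun y => by exact_mod_cast hbound (y, 0) (Or.inr rfl)) x hx t ht

theorem maximum_principle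
    {V : Type*} [Countable V] (q : V → V → ℝ) (hg : IsGraph q)
    (S : Finset V) (T : ℝ) (hT : 0 < T)
    (u u' : ℝ → V → ℝ)
    (hderiv : ∀ x ∈ S, ∀ t ∈ Set.Icc (0 : ℝ) T,
      HasDerivWithinAt (fun s => u s x) (u' t x) (Set.Icc (0 : ℝ) T) t)
    (hineq : ∀ x ∈ S, ∀ t ∈ Set.Icc (0 : ℝ) T, u' t x ≤ lap q (u t) x) :
    ∀ x ∈ S, ∀ t ∈ Set.Icc (0 : ℝ) T,
      (u t x : EReal) ≤
        ⨆ p ∈ {p : V × ℝ | (p.1 ∉ S ∧ p.2 ∈ Set.Icc (0 : ℝ) T) ∨ p.2 = 0},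
          ((u p.2 p.1 : ℝ) : EReal) :=
  maximum_principle_general q hg S T u u' hderiv hineq

end OllivierGraph
end

section
/- (Heat semigroup as minimal solution) Let G=(V,q) be a graph with heat semigroup P_t. Suppose u:[0,∞)×V→ℝ satisfies: u_t is bounded on V for each t, u_t ≥ 0 for all t, t ↦ u_t(x) is differentiable for each x ∈ V, and ∂_t u_t(x) ≥ Δu_t(x) for all x ∈ V and t ≥ 0. Then u_t ≥ P_t u_0 for all t ≥ 0. -/
open scoped BigOperators Classical

namespace OllivierGraph

variable {V : Type*}

/-! On a finite set `S`, `P_t^S` is `exp (t • Δ_S)` for an operator `Δ_S` on `S → ℝ` whose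
off-diagonal entries `q x y` are nonnegative, so `exp (s • Δ_S)` preserves positivity. For `x ∈ S`
the function `s ↦ (exp ((t - s) • Δ_S) u_s) x` has derivative
`(exp ((t - s) • Δ_S) (∂_s u_s - Δ_S u_s)) x ≥ 0` on `(0, t)`: since `u_s ≥ 0`, dropping the
mass that leaves `S` can only lower the Laplacian, so `Δ_S u_s ≤ Δ u_s ≤ ∂_s u_s` on `S`.
Hence `P_t^S u_0 ≤ u_t`, and the supremum over `S` gives the claim. -/

section PositiveExp

open NormedSpace

variable {ι : Type*}

theorem pow_apply_nonneg {T : (ι → ℝ) →L[ℝ] (ι → ℝ)} (hT : ∀ g, 0 ≤ g → 0 ≤ T g)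
    (k : ℕ) {g : ι → ℝ} (hg : 0 ≤ g) : 0 ≤ (T ^ k) g := by
  induction k with
  | zero => simpa using hg
  | succ k ih => rw [pow_succ']; exact hT _ ih

variable [Fintype ι]

theorem exp_smul_apply_eq_tsum (T : (ι → ℝ) →L[ℝ] (ι → ℝ)) (t : ℝ) (g : ι → ℝ) (i : ι) :
    exp (t • T) g i = ∑' k : ℕ, t ^ k / k.factorial * (T ^ k) g i := by
  let eval : ((ι → ℝ) →L[ℝ] (ι → ℝ)) →L[ℝ] ℝ :=
    (ContinuousLinearMap.proj (R := ℝ) (φ := fun _ : ι => ℝ) i).comp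
      (ContinuousLinearMap.apply ℝ (ι → ℝ) g)
  have h := eval.map_tsum (expSeries_summable' (𝕂 := ℝ) (t • T))
  rw [exp_eq_tsum ℝ]
  refine h.trans (tsum_congr fun k => ?_)
  simp [eval, smul_pow]
  ring

theorem exp_smul_apply_nonneg_of_positive {T : (ι → ℝ) →L[ℝ] (ι → ℝ)} (hT : ∀ g, 0 ≤ g → 0 ≤ T g)
    {t : ℝ} (ht : 0 ≤ t) {g : ι → ℝ} (hg : 0 ≤ g) : 0 ≤ exp (t • T) g := fun i => by
  rw [Pi.zero_apply, exp_smul_apply_eq_tsum]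
  exact tsum_nonneg fun k => mul_nonneg (by positivity) (pow_apply_nonneg hT k hg i)

/-- Shifting by `c` makes `T` positive, and the shift only contributes the factor
`Real.exp (-(t * c))` to the exponential. -/
theorem exp_smul_apply_nonneg {T : (ι → ℝ) →L[ℝ] (ι → ℝ)} (c : ℝ)
    (hT : ∀ g, 0 ≤ g → 0 ≤ T g + c • g) {t : ℝ} (ht : 0 ≤ t) {g : ι → ℝ} (hg : 0 ≤ g) :
    0 ≤ exp (t • T) g := by
  set B := T + algebraMap ℝ _ c
  have hB : ∀ g, 0 ≤ g → 0 ≤ B g := fun g hg => by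
    simpa [B, Algebra.algebraMap_eq_smul_one] using hT g hg
  have hsplit : t • T = t • B + algebraMap ℝ _ (-(t * c)) := by
    simp only [B, Algebra.algebraMap_eq_smul_one, smul_add, smul_smul, neg_smul]
    abel
  have hball (x : (ι → ℝ) →L[ℝ] (ι → ℝ)) :
      x ∈ Metric.eball 0 (expSeries ℝ ((ι → ℝ) →L[ℝ] (ι → ℝ))).radius := by
    simp [expSeries_radius_eq_top]
  rw [hsplit, exp_add_of_commute_of_mem_ball (Algebra.commutes _ _).symm (hball _) (hball _),
    ← algebraMap_exp_comm, ← Real.exp_eq_exp_ℝ, ← Algebra.commutes, ← Algebra.smul_def,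
    smul_apply]
  exact smul_nonneg (Real.exp_pos _).le (exp_smul_apply_nonneg_of_positive hB ht hg)

theorem exp_smul_apply_le_of_supersolution (L : (ι → ℝ) →L[ℝ] (ι → ℝ))
    (hL : ∀ s : ℝ, 0 ≤ s → ∀ g, 0 ≤ g → 0 ≤ exp (s • L) g) {v v' : ℝ → ι → ℝ}
    (hv : ∀ s, 0 ≤ s → HasDerivWithinAt v (v' s) (Set.Ici 0) s)
    (hsuper : ∀ s, 0 ≤ s → L (v s) ≤ v' s) {t : ℝ} (ht : 0 ≤ t) :
    exp (t • L) (v 0) ≤ v t := by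
  have hexp (s : ℝ) :
      HasDerivAt (fun r => exp ((t - r) • L)) (-(exp ((t - s) • L) * L)) s := by
    simpa [Function.comp_def] using
      (hasDerivAt_exp_smul_const L (t - s)).scomp s ((hasDerivAt_id s).const_sub t)
  have hderiv (s : ℝ) (hs : s ∈ Set.Ioo 0 t) :
      HasDerivAt (fun r => exp ((t - r) • L) (v r)) (exp ((t - s) • L) (v' s - L (v s))) s := by
    refine ((hexp s).clm_apply ((hv s hs.1.le).hasDerivAt (Ici_mem_nhds hs.1))).congr_deriv ?_
    rw [map_sub, neg_apply, mul_apply_eq_comp]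
    abel
  have hcont : ContinuousOn (fun r => exp ((t - r) • L) (v r)) (Set.Icc 0 t) :=
    ContinuousOn.clm_apply (fun s _ => (hexp s).continuousAt.continuousWithinAt)
      fun s hs => (hv s hs.1).continuousWithinAt.mono Set.Icc_subset_Ici_self
  intro i
  have hmono : MonotoneOn (fun r => exp ((t - r) • L) (v r) i) (Set.Icc 0 t) := by
    refine monotoneOn_of_hasDerivWithinAt_nonneg (convex_Icc 0 t)
      (f' := fun s => exp ((t - s) • L) (v' s - L (v s)) i)
      ((continuous_apply i).comp_continuousOn hcont) (fun s hs => ?_) fun s hs => ?_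
    · rw [interior_Icc] at hs
      exact (hasDerivAt_pi.1 (hderiv s hs) i).hasDerivWithinAt
    · rw [interior_Icc] at hs
      exact hL _ (sub_nonneg.2 hs.2.le) _ (sub_nonneg.2 (hsuper s hs.1.le)) i
  simpa using hmono (Set.left_mem_Icc.2 ht) (Set.right_mem_Icc.2 ht) ht

end PositiveExp

section TruncatedLaplacian

open NormedSpace

theorem summable_mul_of_isGraph {q : V → V → ℝ} (hg : IsGraph q) (x : V) (f : V → ℝ) :
    Summable fun y => q x y * f y :=
  summable_of_hasFiniteSupport <| (hg.2 x).subset fun y hy =>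
    (hg.1 x y).lt_of_ne' (left_ne_zero_of_mul hy)

theorem lap_eq_tsum_sub {q : V → V → ℝ} (hg : IsGraph q) (f : V → ℝ) (x : V) :
    lap q f x = ∑' y, q x y * f y - (∑' y, q x y) * f x := by
  have hdeg : Summable (q x) := by simpa using summable_mul_of_isGraph hg x 1
  rw [lap, ← tsum_mul_right, ← (summable_mul_of_isGraph hg x f).tsum_sub (hdeg.mul_right _)]
  simp only [mul_sub]

/-- `Δ_S` as an operator on functions on `S`: the rates leaving `S` only enter through the total
rate `∑' y, q x y`. -/
noncomputable def lapOn (q : V → V → ℝ) (S : Finset V) : (S → ℝ) →L[ℝ] (S → ℝ) :=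
  LinearMap.toContinuousLinearMap
    { toFun := fun g x => ∑ y : S, q x y * g y - (∑' y, q x y) * g x
      map_add' := fun g h => by ext x; simp [mul_add, Finset.sum_add_distrib]; ring
      map_smul' := fun c g => by
        ext x
        simp only [Pi.smul_apply, smul_eq_mul, RingHom.id_apply, mul_sub, Finset.mul_sum,
          mul_left_comm] }

theorem lapOn_apply (q : V → V → ℝ) (S : Finset V) (g : S → ℝ) (x : S) :
    lapOn q S g x = ∑ y : S, q x y * g y - (∑' y, q x y) * g x :=
  rfl

noncomputable def extendByZero (S : Finset V) (g : S → ℝ) (v : V) : ℝ :=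
  if h : v ∈ S then g ⟨v, h⟩ else 0

theorem lap_extendByZero {q : V → V → ℝ} (hg : IsGraph q) (S : Finset V) (g : S → ℝ) {x : V}
    (hx : x ∈ S) : lap q (extendByZero S g) x = lapOn q S g ⟨x, hx⟩ := by
  rw [lap_eq_tsum_sub hg, tsum_eq_sum (s := S) fun y hy => by simp [extendByZero, hy],
    ← Finset.sum_coe_sort S, lapOn_apply]
  simp [extendByZero, hx]

theorem semiconj_extendByZero_lapOn {q : V → V → ℝ} (hg : IsGraph q) (S : Finset V) :
    Function.Semiconj (extendByZero S) (lapOn q S) (lapS q S) := fun g => by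
  funext v
  by_cases hv : v ∈ S
  · simp [lapS, hv, lap_extendByZero hg S g hv, extendByZero]
  · simp [lapS, hv, extendByZero]

theorem heatS_eq_extendByZero_exp {q : V → V → ℝ} (hg : IsGraph q) (S : Finset V) (t : ℝ)
    (f : V → ℝ) : heatS q S t f = extendByZero S (exp (t • lapOn q S) fun x => f x) := by
  have hf : (fun v => if v ∈ S then f v else 0) = extendByZero S fun x => f x := by
    funext v
    by_cases hv : v ∈ S <;> simp [extendByZero, hv]
  have hiter (k : ℕ) (g : S → ℝ) :
      (lapS q S)^[k] (extendByZero S g) = extendByZero S ((lapOn q S ^ k) g) := by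
    rw [FunLike.coe_pow_eq_iterate]
    exact ((semiconj_extendByZero_lapOn hg S).iterate_right k g).symm
  funext x
  simp only [heatS, hf, hiter]
  by_cases hx : x ∈ S
  · simp [extendByZero, hx, exp_smul_apply_eq_tsum]
  · simp [extendByZero, hx]

theorem lapOn_add_smul_nonneg {q : V → V → ℝ} (hg : IsGraph q) (S : Finset V) {g : S → ℝ}
    (hg₀ : 0 ≤ g) : 0 ≤ lapOn q S g + (∑ z : S, ∑' y, q z y) • g := fun x => by
  have hdeg : ∑' y, q x y ≤ ∑ z : S, ∑' y, q z y :=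
    Finset.single_le_sum (f := fun z : S => ∑' y, q z y) (fun z _ => tsum_nonneg (hg.1 z))
      (Finset.mem_univ x)
  have hout := Finset.sum_nonneg (s := Finset.univ) fun (y : S) _ => mul_nonneg (hg.1 x y) (hg₀ y)
  have hdiag := mul_nonneg (sub_nonneg.2 hdeg) (hg₀ x)
  simp only [Pi.zero_apply, Pi.add_apply, Pi.smul_apply, smul_eq_mul, lapOn_apply]
  linarith

theorem lapOn_le_lap {q : V → V → ℝ} (hg : IsGraph q) (S : Finset V) {f : V → ℝ} (hf : 0 ≤ f) :
    lapOn q S (fun x => f x) ≤ fun x : S => lap q f x := fun x => by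
  show _ ≤ lap q f x
  rw [lapOn_apply, lap_eq_tsum_sub hg, Finset.sum_coe_sort S fun y => q x y * f y]
  gcongr
  exact (summable_mul_of_isGraph hg x f).sum_le_tsum S fun y _ => mul_nonneg (hg.1 x y) (hf y)

end TruncatedLaplacian

theorem heatS_le_of_supersolution {q : V → V → ℝ} (hg : IsGraph q) {u u' : ℝ → V → ℝ}
    (hnonneg : ∀ t : ℝ, 0 ≤ t → ∀ x, 0 ≤ u t x)
    (hderiv : ∀ x, ∀ t : ℝ, 0 ≤ t →
      HasDerivWithinAt (fun s => u s x) (u' t x) (Set.Ici (0 : ℝ)) t)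
    (hineq : ∀ x, ∀ t : ℝ, 0 ≤ t → lap q (u t) x ≤ u' t x)
    (S : Finset V) {t : ℝ} (ht : 0 ≤ t) (x : V) : heatS q S t (u 0) x ≤ u t x := by
  rw [heatS_eq_extendByZero_exp hg]
  by_cases hx : x ∈ S
  · rw [extendByZero, dif_pos hx]
    refine exp_smul_apply_le_of_supersolution (lapOn q S)
      (fun s hs g hg₀ => exp_smul_apply_nonneg _ (fun _ => lapOn_add_smul_nonneg hg S) hs hg₀)
      (v := fun s x => u s x) (v' := fun s x => u' s x)
      (fun s hs => hasDerivWithinAt_pi.2 fun x => hderiv x s hs)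
      (fun s hs => (lapOn_le_lap hg S (hnonneg s hs)).trans fun x => hineq x s hs) ht ⟨x, hx⟩
  · simpa [extendByZero, hx] using hnonneg t ht x

theorem heat_semigroup_minimal_solution_general
    {V : Type*} (q : V → V → ℝ) (hg : IsGraph q)
    (u u' : ℝ → V → ℝ)
    (hnonneg : ∀ t : ℝ, 0 ≤ t → ∀ x, 0 ≤ u t x)
    (hderiv : ∀ x, ∀ t : ℝ, 0 ≤ t →
      HasDerivWithinAt (fun s => u s x) (u' t x) (Set.Ici (0 : ℝ)) t)
    (hineq : ∀ x, ∀ t : ℝ, 0 ≤ t → lap q (u t) x ≤ u' t x) :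
    ∀ t : ℝ, 0 ≤ t → ∀ x, heat q t (u 0) x ≤ u t x := by
  intro t ht x
  have hpos : (fun v => max (u 0 v) 0) = u 0 :=
    funext fun v => max_eq_left (hnonneg 0 le_rfl v)
  have hneg : (fun v => max (-u 0 v) 0) = 0 :=
    funext fun v => max_eq_right (neg_nonpos.2 (hnonneg 0 le_rfl v))
  have hzero : heatPos q t 0 x = 0 := by
    have hS (S : Finset V) : heatS q S t 0 x = 0 := by
      simp [heatS_eq_extendByZero_exp hg, extendByZero, ← Pi.zero_def]
    simp [heatPos, hS]
  rw [heat, hpos, hneg, hzero, sub_zero]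
  exact ciSup_le fun S => heatS_le_of_supersolution hg hnonneg hderiv hineq S ht x

theorem heat_semigroup_minimal_solution
    {V : Type*} [Countable V] (q : V → V → ℝ) (hg : IsGraph q)
    (u u' : ℝ → V → ℝ)
    (hbdd : ∀ t : ℝ, 0 ≤ t → IsBoundedFun (u t))
    (hnonneg : ∀ t : ℝ, 0 ≤ t → ∀ x, 0 ≤ u t x)
    (hderiv : ∀ x, ∀ t : ℝ, 0 ≤ t →
      HasDerivWithinAt (fun s => u s x) (u' t x) (Set.Ici (0 : ℝ)) t)
    (hineq : ∀ x, ∀ t : ℝ, 0 ≤ t → lap q (u t) x ≤ u' t x) :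
    ∀ t : ℝ, 0 ≤ t → ∀ x, heat q t (u 0) x ≤ u t x :=
  heat_semigroup_minimal_solution_general q hg u u' hnonneg hderiv hineq

end OllivierGraph
end

section
/- Let c>0 and let φ_t(n) := P_t^{ℕ0} 1_{ℕ+}(n) be the heat semigroup of the birth-death chain on ℕ0 with rates 2c and absorbing state 0 applied to the indicator of the positive integers. Then φ_t(y) ≥ φ_t(x) whenever x ≤ y in ℕ0, for every t ≥ 0. -/
open scoped BigOperators Classical

namespace OllivierGraph

variable {V : Type*}

/-!
Only positive states move, at the same rates everywhere, while `0` is absorbing and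
`1_{ℕ+}(0) = 0`. Hence the truncated semigroup for `S` at `x` agrees with the truncated semigroup
for the translate `(S \ {0}) + d` at `x + d`, in which `d` plays the role of the absorbing state.
Taking suprema over `S` gives `φ_t(x) ≤ φ_t(x + d)`; the suprema are finite because all
truncations are bounded by `e^{8|c||t|}`.
-/

lemma lapS_zero (q : V → V → ℝ) (S : Finset V) : lapS q S 0 = 0 := by
  funext x
  simp [lapS, lap]

lemma heatS_zero (q : V → V → ℝ) (S : Finset V) (t : ℝ) : heatS q S t 0 = 0 := by
  funext x
  have hiter (k : ℕ) : (lapS q S)^[k] (fun _ => 0) = fun _ => 0 :=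
    Function.iterate_fixed (lapS_zero q S) k
  simp [heatS, hiter]

lemma heat_eq_heatPos_of_nonneg (q : V → V → ℝ) (t : ℝ) {f : V → ℝ} (hf : 0 ≤ f) :
    heat q t f = heatPos q t f := by
  funext x
  have hpos : (fun v => max (f v) 0) = f := funext fun v => max_eq_left (hf v)
  have hneg : (fun v => max (-f v) 0) = 0 := funext fun v => max_eq_right (neg_nonpos.mpr (hf v))
  simp [heat, heatPos, hpos, hneg, heatS_zero]

lemma lap_qBD (c : ℝ) (g : ℕ → ℝ) (x : ℕ) :
    lap (qBD c) g x = if 0 < x then 2 * c * (g (x + 1) + g (x - 1) - 2 * g x) else 0 := by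
  unfold lap qBD
  split_ifs with hx
  · obtain ⟨n, rfl⟩ := Nat.exists_eq_add_one_of_ne_zero hx.ne'
    rw [tsum_eq_sum (s := {n, n + 2}), Finset.sum_pair (by omega)]
    · simp only [add_tsub_cancel_right, hx, true_and, true_or, or_true, if_true]
      ring
    · intro y hy
      simp only [Finset.mem_insert, Finset.mem_singleton, not_or] at hy
      rw [if_neg (by omega), zero_mul]
  · simp [hx]

lemma abs_lapS_qBD_le (c : ℝ) (S : Finset ℕ) {g : ℕ → ℝ} {M : ℝ} (hg : ∀ v, |g v| ≤ M)
    (x : ℕ) : |lapS (qBD c) S g x| ≤ 8 * |c| * M := by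
  have hM : 0 ≤ M := (abs_nonneg _).trans (hg 0)
  unfold lapS
  rw [lap_qBD]
  split_ifs
  · have hsecond : |g (x + 1) + g (x - 1) - 2 * g x| ≤ 4 * M := by
      have h₁ := abs_le.mp (hg (x + 1))
      have h₂ := abs_le.mp (hg (x - 1))
      have h₃ := abs_le.mp (hg x)
      exact abs_le.mpr ⟨by linarith, by linarith⟩
    calc |2 * c * (g (x + 1) + g (x - 1) - 2 * g x)|
        = 2 * |c| * |g (x + 1) + g (x - 1) - 2 * g x| := by simp [abs_mul]
      _ ≤ 2 * |c| * (4 * M) := by gcongr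
      _ = 8 * |c| * M := by ring
  all_goals simp only [abs_zero]; positivity

lemma abs_iterate_lapS_qBD_le (c : ℝ) (S : Finset ℕ) {g : ℕ → ℝ} {M : ℝ}
    (hg : ∀ v, |g v| ≤ M) (k x : ℕ) : |(lapS (qBD c) S)^[k] g x| ≤ (8 * |c|) ^ k * M := by
  induction k generalizing x with
  | zero => simpa using hg x
  | succ k ih =>
    rw [Function.iterate_succ_apply', pow_succ', mul_assoc]
    exact abs_lapS_qBD_le c S ih x

lemma abs_heatS_qBD_le (c t : ℝ) (S : Finset ℕ) {f : ℕ → ℝ} {M : ℝ} (hf : ∀ v, |f v| ≤ M)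
    (x : ℕ) : |heatS (qBD c) S t f x| ≤ M * Real.exp (8 * |c| * |t|) := by
  have hM : 0 ≤ M := (abs_nonneg _).trans (hf 0)
  have hexp : HasSum (fun k : ℕ => M * ((8 * |c| * |t|) ^ k / k.factorial))
      (M * Real.exp (8 * |c| * |t|)) := by
    rw [Real.exp_eq_exp_ℝ]
    exact (NormedSpace.expSeries_div_hasSum_exp _).mul_left M
  have hterm {g : ℕ → ℝ} (hg : ∀ v, |g v| ≤ M) (k : ℕ) :
      ‖t ^ k / k.factorial * (lapS (qBD c) S)^[k] g x‖
        ≤ M * ((8 * |c| * |t|) ^ k / k.factorial) :=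
    calc ‖t ^ k / k.factorial * (lapS (qBD c) S)^[k] g x‖
        = |t| ^ k / k.factorial * |(lapS (qBD c) S)^[k] g x| := by simp
      _ ≤ |t| ^ k / k.factorial * ((8 * |c|) ^ k * M) := by
        gcongr
        exact abs_iterate_lapS_qBD_le c S hg k x
      _ = M * ((8 * |c| * |t|) ^ k / k.factorial) := by ring
  rw [← Real.norm_eq_abs, heatS]
  refine tsum_of_norm_bounded hexp (hterm fun v => ?_)
  split_ifs
  exacts [hf v, by simpa using hM]

def shiftPos (S : Finset ℕ) (d : ℕ) : Finset ℕ := (S.erase 0).image (· + d)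

lemma add_mem_shiftPos_iff {S : Finset ℕ} {d v : ℕ} : v + d ∈ shiftPos S d ↔ v ≠ 0 ∧ v ∈ S := by
  simp [shiftPos]

lemma iterate_lapS_qBD_shiftPos (c : ℝ) (S : Finset ℕ) (d : ℕ) {g g' : ℕ → ℝ}
    (hg : ∀ v, g' (v + d) = g v) (k v : ℕ) :
    (lapS (qBD c) (shiftPos S d))^[k] g' (v + d) = (lapS (qBD c) S)^[k] g v := by
  induction k generalizing v with
  | zero => exact hg v
  | succ k ih =>
    simp only [Function.iterate_succ_apply', lapS, add_mem_shiftPos_iff, lap_qBD]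
    rcases Nat.eq_zero_or_pos v with rfl | hv
    · simp
    · rw [show v + d + 1 = v + 1 + d by omega, show v + d - 1 = v - 1 + d by omega, ih, ih, ih]
      simp [hv.ne', hv, show 0 < v + d by omega]

lemma heatS_qBD_shiftPos (c t : ℝ) (S : Finset ℕ) (d : ℕ) {f : ℕ → ℝ} (hf₀ : f 0 = 0)
    (hf : ∀ v, 0 < v → f (v + d) = f v) (x : ℕ) :
    heatS (qBD c) (shiftPos S d) t f (x + d) = heatS (qBD c) S t f x := by
  unfold heatS
  refine tsum_congr fun k => ?_
  rw [iterate_lapS_qBD_shiftPos c S d (fun v => ?_)]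
  simp only [add_mem_shiftPos_iff]
  rcases Nat.eq_zero_or_pos v with rfl | hv
  · simp [hf₀]
  · simp [hv.ne', hf v hv]

lemma heatPos_qBD_le_add (c t : ℝ) {f : ℕ → ℝ} {M : ℝ} (hfM : ∀ v, |f v| ≤ M) (hf₀ : f 0 = 0)
    (d : ℕ) (hf : ∀ v, 0 < v → f (v + d) = f v) (x : ℕ) :
    heatPos (qBD c) t f x ≤ heatPos (qBD c) t f (x + d) := by
  have hbdd : BddAbove (Set.range fun S => heatS (qBD c) S t f (x + d)) :=
    ⟨M * Real.exp (8 * |c| * |t|), by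
      rintro _ ⟨S, rfl⟩
      exact (le_abs_self _).trans (abs_heatS_qBD_le c t S hfM _)⟩
  refine ciSup_le fun S => ?_
  rw [← heatS_qBD_shiftPos c t S d hf₀ hf]
  exact le_ciSup hbdd _

theorem phiBD_monotone_general
    (c : ℝ) (t : ℝ) (x y : ℕ) (hxy : x ≤ y) :
    phiBD c t x ≤ phiBD c t y := by
  obtain ⟨d, rfl⟩ := Nat.exists_eq_add_of_le hxy
  have hnonneg : (0 : ℕ → ℝ) ≤ fun k => if 0 < k then 1 else 0 := fun k => by
    simp only [Pi.zero_apply]; split_ifs <;> norm_num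
  have hbound (k : ℕ) : |(if 0 < k then 1 else 0 : ℝ)| ≤ 1 := by split_ifs <;> norm_num
  unfold phiBD
  rw [heat_eq_heatPos_of_nonneg _ _ hnonneg]
  exact heatPos_qBD_le_add c t hbound (by simp) d (fun v hv => by simp [hv]) x

theorem phiBD_monotone
    (c : ℝ) (hc : 0 < c) (t : ℝ) (ht : 0 ≤ t) (x y : ℕ) (hxy : x ≤ y) :
    phiBD c t x ≤ phiBD c t y :=
  phiBD_monotone_general c t x y hxy

end OllivierGraph
end

section
/- Let c>0 and let φ_t(n) := P_t^{ℕ0} 1_{ℕ+}(n) be the heat semigroup of the birth-death chain on ℕ0 with rates 2c and absorbing state 0 applied to the indicator of the positive integers. Then for every integer r ≥ 1 and every t > 0: φ_t(r) ≤ r/(2√(t·c)). -/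
open scoped BigOperators Classical

namespace OllivierGraph

variable {V : Type*}

/-!
On functions vanishing outside `S \ {0}`, the truncated generator of the birth-death chain is
`Δ_S = A - 4c`, where `A h x = 2c (h (x - 1) + h (x + 1))` for `x ∈ S`, `x > 0`, and `A h x = 0`
otherwise; since `A` commutes with the scalar `4c`, `P_t^S = e^{-4ct} e^{tA}`. Unfolding `A^k`,
`|A^k 1_{S ∩ ℕ₊} r|` is at most `(2c)^k` times the number of `±1`-walks of length `k` from `r`
that avoid `0`, which by the reflection principle is at most `r C(k, ⌊k/2⌋) ≤ r 2^k / √(k + 1)`.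
With `μ = 4ct` this gives `P_t^S 1_{ℕ₊} r ≤ r e^{-μ} ∑ μ^k / (k! √(k + 1))`, and the AM-GM bound
`2 √μ / √(k + 1) ≤ μ / (k + 1) + 1` shows that the sum is at most `e^μ / √μ = e^μ / (2 √(ct))`.
-/

-- Stated for any `g` agreeing with `f` on `S`: the restriction inside `heatS` is elaborated with
-- classical decidability of `v ∈ S`, which is not the instance used for concrete `Finset ℕ`.
lemma heatS_eq_tsum_iterate {q : V → V → ℝ} {S : Finset V} {f g : V → ℝ}
    (hgS : ∀ v ∈ S, g v = f v) (hg : ∀ v ∉ S, g v = 0) (t : ℝ) (x : V) :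
    heatS q S t f x = ∑' k : ℕ, t ^ k / k.factorial * (lapS q S)^[k] g x := by
  have hrestrict : (fun v => if v ∈ S then f v else 0) = g := funext fun v => by
    by_cases hv : v ∈ S <;> simp [hv, hgS, hg]
  rw [heatS, hrestrict]

lemma heatPos_zero (q : V → V → ℝ) (t : ℝ) (x : V) : heatPos q t (fun _ => 0) x = 0 := by
  have hzero : ∀ S : Finset V, heatS q S t (fun _ => 0) x = 0 := fun S => by
    have hfix : lapS q S (fun _ => 0) = fun _ => 0 := funext fun y => by simp [lapS, lap]
    simp [heatS_eq_tsum_iterate (g := fun _ => 0) (fun _ _ => rfl) (fun _ _ => rfl),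
      Function.iterate_fixed hfix]
  simp [heatPos, hzero]

/-- By the reflection principle, `walksAvoidingZero k x` is the number of `±1`-walks of length `k`
started at `x` that never visit `0`. -/
def walksAvoidingZero (k x : ℕ) : ℕ :=
  ∑ i ∈ Finset.range x, k.choose ((k + i + 1) / 2)

lemma one_le_walksAvoidingZero_zero_left {x : ℕ} (hx : 0 < x) : 1 ≤ walksAvoidingZero 0 x :=
  Finset.single_le_sum (f := fun i => (0).choose ((0 + i + 1) / 2)) (fun _ _ => Nat.zero_le _)
    (Finset.mem_range.2 hx)

lemma walksAvoidingZero_succ_succ (k y : ℕ) :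
    walksAvoidingZero (k + 1) (y + 1) = walksAvoidingZero k y + walksAvoidingZero k (y + 2) := by
  have hsymm : k.choose (k / 2) = k.choose ((k + 1) / 2) := Nat.choose_symm_of_eq_add (by omega)
  have hpascal : ∀ i, (k + 1).choose ((k + 1 + i + 1) / 2)
      = k.choose ((k + i) / 2) + k.choose ((k + (i + 1) + 1) / 2) := fun i => by
    rw [show (k + 1 + i + 1) / 2 = (k + i) / 2 + 1 by omega, Nat.choose_succ_succ',
      show (k + i) / 2 + 1 = (k + (i + 1) + 1) / 2 by omega]
  unfold walksAvoidingZero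
  simp only [hpascal, Finset.sum_add_distrib]
  rw [Finset.sum_range_succ' (fun i => k.choose ((k + i) / 2)),
    Finset.sum_range_succ' (fun i => k.choose ((k + i + 1) / 2)) (y + 1)]
  simp only [add_zero, hsymm, show ∀ i, k + (i + 1) = k + i + 1 from fun _ => rfl]
  ring

lemma walksAvoidingZero_le (k x : ℕ) : walksAvoidingZero k x ≤ x * k.choose (k / 2) := by
  unfold walksAvoidingZero
  simpa using Finset.sum_le_card_nsmul (Finset.range x) _ _
    (fun i _ => Nat.choose_le_middle ((k + i + 1) / 2) k)

lemma centralBinom_sq_mul_le (n : ℕ) : n.centralBinom ^ 2 * (2 * n + 1) ≤ 16 ^ n := by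
  induction n with
  | zero => simp
  | succ n ih =>
    have hrec := Nat.succ_mul_centralBinom_succ n
    have hsq : (n + 1) ^ 2 * ((n + 1).centralBinom ^ 2 * (2 * (n + 1) + 1))
        ≤ (n + 1) ^ 2 * 16 ^ (n + 1) := by
      calc (n + 1) ^ 2 * ((n + 1).centralBinom ^ 2 * (2 * (n + 1) + 1))
          = 4 * (2 * n + 1) * (2 * n + 3) * (n.centralBinom ^ 2 * (2 * n + 1)) := by
            rw [← mul_assoc, ← mul_pow, hrec]; ring
        _ ≤ 4 * (2 * n + 1) * (2 * n + 3) * 16 ^ n := Nat.mul_le_mul_left _ ih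
        _ ≤ 16 * (n + 1) ^ 2 * 16 ^ n := Nat.mul_le_mul_right _ (by nlinarith)
        _ = (n + 1) ^ 2 * 16 ^ (n + 1) := by ring
    exact Nat.le_of_mul_le_mul_left hsq (by positivity)

lemma choose_half_sq_mul_le (k : ℕ) : k.choose (k / 2) ^ 2 * (k + 1) ≤ 4 ^ k := by
  obtain ⟨m, rfl | rfl⟩ := Nat.even_or_odd' k
  · rw [show 2 * m / 2 = m by omega, ← Nat.centralBinom_eq_two_mul_choose, pow_mul]
    exact centralBinom_sq_mul_le m
  · have hcentral : (m + 1).centralBinom = 2 * (2 * m + 1).choose m := by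
      rw [Nat.centralBinom_eq_two_mul_choose, show 2 * (m + 1) = 2 * m + 1 + 1 by ring,
        Nat.choose_succ_succ', Nat.choose_symm_half]
      ring
    have h := centralBinom_sq_mul_le (m + 1)
    rw [hcentral] at h
    rw [show (2 * m + 1) / 2 = m by omega]
    have : 4 * ((2 * m + 1).choose m ^ 2 * (2 * m + 1 + 1)) ≤ 4 * 4 ^ (2 * m + 1) := by
      calc _ ≤ (2 * (2 * m + 1).choose m) ^ 2 * (2 * (m + 1) + 1) := by
            rw [mul_pow]; nlinarith
        _ ≤ 16 ^ (m + 1) := h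
        _ = 4 * 4 ^ (2 * m + 1) := by rw [show 16 = 4 ^ 2 by rfl, ← pow_mul]; ring
    omega

open Nat in
lemma two_mul_pow_mul_choose_half_div_le (s : ℝ) (i : ℕ) :
    2 * s * ((s ^ 2 / 2) ^ i * i.choose (i / 2) / i !)
      ≤ (s ^ 2) ^ (i + 1) / (i + 1)! + (s ^ 2) ^ i / i ! := by
  have hC : ((i.choose (i / 2) : ℕ) : ℝ) ^ 2 * (i + 1) ≤ (2 ^ i) ^ 2 := by
    rw [← pow_mul, mul_comm i, pow_mul]
    exact_mod_cast choose_half_sq_mul_le i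
  -- AM-GM, using `C(i, i/2) ≤ 2 ^ i / √(i + 1)`
  have hamgm : 2 * s * (i + 1) * i.choose (i / 2) ≤ 2 ^ i * (s ^ 2 + (i + 1)) := by
    refine le_of_mul_le_mul_left ?_ (by positivity : (0 : ℝ) < 2 ^ i)
    nlinarith [sq_nonneg (2 ^ i * s - i.choose (i / 2) * (i + 1))]
  rw [Nat.factorial_succ, div_pow, pow_succ (s ^ 2)]
  push_cast
  rw [div_add_div _ _ (by positivity) (by positivity), le_div_iff₀ (by positivity)]
  field_simp
  nlinarith [mul_le_mul_of_nonneg_left hamgm (pow_nonneg (sq_nonneg s) i)]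

lemma lap_qBD_zero (c : ℝ) (h : ℕ → ℝ) : lap (qBD c) h 0 = 0 := by
  simp [lap, qBD]

lemma lap_qBD_succ (c : ℝ) (h : ℕ → ℝ) (y : ℕ) :
    lap (qBD c) h (y + 1) = 2 * c * (h y + h (y + 2)) - 4 * c * h (y + 1) := by
  unfold lap
  rw [tsum_eq_sum (s := {y, y + 2}) fun z hz => ?_, Finset.sum_pair (by omega)]
  · unfold qBD
    rw [if_pos (by omega), if_pos (by omega)]
    ring
  · simp only [Finset.mem_insert, Finset.mem_singleton, not_or] at hz
    unfold qBD
    rw [if_neg (by omega), zero_mul]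

lemma lapS_qBD_eq_zero (c : ℝ) {S : Finset ℕ} (h : ℕ → ℝ) {x : ℕ} (hx : x ∉ S ∨ x = 0) :
    lapS (qBD c) S h x = 0 := by
  rcases hx with hx | rfl
  · simp [lapS, hx]
  · simp [lapS, lap_qBD_zero]

noncomputable def adjBD (c : ℝ) (S : Finset ℕ) : Module.End ℝ (ℕ → ℝ) where
  toFun h x := if x ∈ S ∧ 0 < x then 2 * c * (h (x - 1) + h (x + 1)) else 0
  map_add' h h' := by ext x; simp only [Pi.add_apply]; split_ifs <;> ring
  map_smul' a h := by
    ext x; simp only [Pi.smul_apply, smul_eq_mul, RingHom.id_apply]; split_ifs <;> ring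

lemma adjBD_apply (c : ℝ) (S : Finset ℕ) (h : ℕ → ℝ) (x : ℕ) :
    adjBD c S h x = if x ∈ S ∧ 0 < x then 2 * c * (h (x - 1) + h (x + 1)) else 0 := rfl

lemma lapS_qBD_eq_adjBD_sub (c : ℝ) {S : Finset ℕ} {h : ℕ → ℝ}
    (hh : ∀ x, x ∉ S ∨ x = 0 → h x = 0) :
    lapS (qBD c) S h = adjBD c S h - (4 * c) • h := by
  ext x
  by_cases hx : x ∉ S ∨ x = 0
  · have : ¬ (x ∈ S ∧ 0 < x) := fun ⟨hxS, hpos⟩ => hx.elim (· hxS) (by omega)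
    simp [lapS_qBD_eq_zero c h hx, adjBD_apply, this, hh x hx]
  · obtain ⟨hxS, y, rfl⟩ : x ∈ S ∧ ∃ y, x = y + 1 := ⟨by tauto, x - 1, by omega⟩
    simp [lapS, hxS, lap_qBD_succ, adjBD_apply]

lemma iterate_lapS_qBD (c : ℝ) {S : Finset ℕ} {g : ℕ → ℝ}
    (hg : ∀ x, x ∉ S ∨ x = 0 → g x = 0) (k : ℕ) :
    (lapS (qBD c) S)^[k] g = ((adjBD c S + (-(4 * c)) • 1) ^ k) g := by
  induction k with
  | zero => rfl
  | succ k ih =>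
    have hvanish : ∀ x, x ∉ S ∨ x = 0 → (lapS (qBD c) S)^[k] g x = 0 := by
      intro x hx
      cases k with
      | zero => exact hg x hx
      | succ k => rw [Function.iterate_succ_apply']; exact lapS_qBD_eq_zero c _ hx
    rw [Function.iterate_succ_apply', lapS_qBD_eq_adjBD_sub c hvanish, ih, pow_succ',
      Module.End.mul_apply]
    simp [sub_eq_add_neg]

open Finset in
lemma iterate_lapS_qBD_apply (c : ℝ) {S : Finset ℕ} {g : ℕ → ℝ}
    (hg : ∀ x, x ∉ S ∨ x = 0 → g x = 0) (k x : ℕ) :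
    (lapS (qBD c) S)^[k] g x
      = ∑ ij ∈ antidiagonal k, k.choose ij.1 * (-(4 * c)) ^ ij.2 * (adjBD c S ^ ij.1) g x := by
  rw [iterate_lapS_qBD c hg, ((Commute.one_right _).smul_right _).add_pow']
  simp only [smul_pow, one_pow, Algebra.mul_smul_comm, mul_one, nsmul_eq_mul, LinearMap.coe_sum,
    LinearMap.coe_smul, Finset.sum_apply, Pi.smul_apply, Module.End.mul_apply,
    Module.End.natCast_apply, Pi.mul_apply, Pi.natCast_apply, smul_eq_mul]
  exact Finset.sum_congr rfl fun _ _ => by ring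

lemma abs_adjBD_pow_apply_le {c : ℝ} (hc : 0 ≤ c) (S : Finset ℕ) {g : ℕ → ℝ} (hg0 : g 0 = 0)
    (hg : ∀ x, |g x| ≤ 1) (k x : ℕ) :
    |(adjBD c S ^ k) g x| ≤ (2 * c) ^ k * walksAvoidingZero k x := by
  induction k generalizing x with
  | zero =>
    rcases Nat.eq_zero_or_pos x with rfl | hx
    · simp [hg0]
    · simpa using (hg x).trans (by exact_mod_cast one_le_walksAvoidingZero_zero_left hx)
  | succ k ih =>
    rw [pow_succ', Module.End.mul_apply, adjBD_apply]
    split_ifs with hx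
    · obtain ⟨y, rfl⟩ : ∃ y, x = y + 1 := ⟨x - 1, by omega⟩
      set W := (adjBD c S ^ k) g
      calc |2 * c * (W (y + 1 - 1) + W (y + 1 + 1))| ≤ 2 * c * (|W y| + |W (y + 2)|) := by
            rw [abs_mul, abs_of_nonneg (by positivity)]
            exact mul_le_mul_of_nonneg_left (abs_add_le _ _) (by positivity)
        _ ≤ 2 * c * ((2 * c) ^ k * walksAvoidingZero k y
              + (2 * c) ^ k * walksAvoidingZero k (y + 2)) := by gcongr <;> apply ih
        _ = (2 * c) ^ (k + 1) * walksAvoidingZero (k + 1) (y + 1) := by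
            rw [walksAvoidingZero_succ_succ]; push_cast; ring
    · simp only [abs_zero]; positivity

open Nat in
lemma heatS_qBD_eq (c t : ℝ) {S : Finset ℕ} {f g : ℕ → ℝ} (hgS : ∀ v ∈ S, g v = f v)
    (hg : ∀ v, v ∉ S ∨ v = 0 → g v = 0) (x : ℕ)
    (hsum : Summable fun i => ‖t ^ i / i ! * (adjBD c S ^ i) g x‖) :
    heatS (qBD c) S t f x
      = (∑' i, t ^ i / i ! * (adjBD c S ^ i) g x) * Real.exp (-(4 * c * t)) := by
  have hexp : HasSum (fun j => (-(4 * c * t)) ^ j / j !) (Real.exp (-(4 * c * t))) := by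
    rw [Real.exp_eq_exp_ℝ]; exact NormedSpace.expSeries_div_hasSum_exp _
  rw [heatS_eq_tsum_iterate hgS (fun v hv => hg v (Or.inl hv)), ← hexp.tsum_eq,
    tsum_mul_tsum_eq_tsum_sum_antidiagonal_of_summable_norm hsum
      (by simpa [norm_div, norm_pow] using Real.summable_pow_div_factorial ‖-(4 * c * t)‖)]
  refine tsum_congr fun k => ?_
  rw [iterate_lapS_qBD_apply c hg, Finset.mul_sum]
  refine Finset.sum_congr rfl fun ⟨i, j⟩ hij => ?_
  obtain rfl : i + j = k := by simpa using hij
  rw [Nat.cast_add_choose]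
  field_simp
  ring

open Nat in
lemma norm_pow_div_mul_adjBD_pow_apply_le {c t s : ℝ} (hc : 0 ≤ c) (ht : 0 ≤ t) (hs : 0 < s)
    (hs2 : s ^ 2 = 4 * c * t) (S : Finset ℕ) {g : ℕ → ℝ} (hg0 : g 0 = 0) (hg : ∀ x, |g x| ≤ 1)
    (r i : ℕ) :
    ‖t ^ i / i ! * (adjBD c S ^ i) g r‖
      ≤ r / (2 * s) * ((s ^ 2) ^ (i + 1) / (i + 1)! + (s ^ 2) ^ i / i !) := by
  have hwalks : (walksAvoidingZero i r : ℝ) ≤ r * i.choose (i / 2) := by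
    exact_mod_cast walksAvoidingZero_le i r
  calc ‖t ^ i / i ! * (adjBD c S ^ i) g r‖
      = t ^ i / i ! * |(adjBD c S ^ i) g r| := by
        rw [Real.norm_eq_abs, abs_mul, abs_of_nonneg (by positivity)]
    _ ≤ t ^ i / i ! * ((2 * c) ^ i * (r * i.choose (i / 2))) := by
        gcongr
        exact (abs_adjBD_pow_apply_le hc S hg0 hg i r).trans
          (mul_le_mul_of_nonneg_left hwalks (by positivity))
    _ = r / (2 * s) * (2 * s * ((s ^ 2 / 2) ^ i * i.choose (i / 2) / i !)) := by
        rw [hs2]; field_simp; ring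
    _ ≤ _ := by gcongr; exact two_mul_pow_mul_choose_half_div_le s i

open Nat in
lemma heatS_qBD_indicator_le {c t : ℝ} (hc : 0 < c) (ht : 0 < t) (S : Finset ℕ) (r : ℕ) :
    heatS (qBD c) S t (fun k => if 0 < k then 1 else 0) r ≤ r / (2 * √(t * c)) := by
  set s := 2 * √(t * c)
  have hs : 0 < s := by positivity
  have hs2 : s ^ 2 = 4 * c * t := by rw [mul_pow, Real.sq_sqrt (by positivity)]; ring
  set g : ℕ → ℝ := fun v => if v ∈ S ∧ 0 < v then 1 else 0
  have hg : ∀ v, v ∉ S ∨ v = 0 → g v = 0 := by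
    rintro v (hv | rfl)
    · simp [g, hv]
    · simp [g]
  have hexp : HasSum (fun i => (s ^ 2) ^ i / (i !)) (Real.exp (s ^ 2)) := by
    rw [Real.exp_eq_exp_ℝ]; exact NormedSpace.expSeries_div_hasSum_exp _
  have hbound : HasSum (fun i => r / (2 * s) * ((s ^ 2) ^ (i + 1) / (i + 1)! + (s ^ 2) ^ i / i !))
      (r / (2 * s) * ((Real.exp (s ^ 2) - 1) + Real.exp (s ^ 2))) := by
    have := (((hasSum_nat_add_iff' 1).2 hexp).add hexp).mul_left (r / (2 * s))
    rwa [Finset.sum_range_one, pow_zero, factorial_zero, cast_one, div_one] at this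
  have hterm := norm_pow_div_mul_adjBD_pow_apply_le hc.le ht.le hs hs2 S (g := g)
    (hg 0 (Or.inr rfl)) (fun v => by simp only [g]; split_ifs <;> norm_num) r
  have hsum := hbound.summable.of_nonneg_of_le (fun _ => norm_nonneg _) hterm
  rw [heatS_qBD_eq c t (fun v hv => by simp [g, hv]) hg r hsum, ← hs2]
  calc (∑' i, t ^ i / i ! * (adjBD c S ^ i) g r) * Real.exp (-s ^ 2)
      ≤ r / (2 * s) * ((Real.exp (s ^ 2) - 1) + Real.exp (s ^ 2)) * Real.exp (-s ^ 2) := by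
        gcongr
        rw [← hbound.tsum_eq]
        exact hsum.of_norm.tsum_le_tsum (fun i => (le_abs_self _).trans (hterm i)) hbound.summable
    _ ≤ r / s := by
        rw [Real.exp_neg]
        field_simp
        nlinarith [Real.exp_pos (s ^ 2)]

theorem phiBD_le_general
    (c : ℝ) (hc : 0 < c) (r : ℕ) (t : ℝ) (ht : 0 < t) :
    phiBD c t r ≤ (r : ℝ) / (2 * Real.sqrt (t * c)) := by
  have hpos : (fun v : ℕ => max (if 0 < v then (1 : ℝ) else 0) 0)
      = fun v => if 0 < v then 1 else 0 :=
    funext fun v => by split_ifs <;> norm_num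
  have hneg : (fun v : ℕ => max (-(if 0 < v then (1 : ℝ) else 0)) 0) = fun _ => 0 :=
    funext fun v => by split_ifs <;> norm_num
  rw [phiBD, heat, hpos, hneg, heatPos_zero, sub_zero, heatPos]
  exact ciSup_le fun S => heatS_qBD_indicator_le hc ht S r

theorem phiBD_le
    (c : ℝ) (hc : 0 < c) (r : ℕ) (hr : 1 ≤ r) (t : ℝ) (ht : 0 < t) :
    phiBD c t r ≤ (r : ℝ) / (2 * Real.sqrt (t * c)) :=
  phiBD_le_general c hc r t ht

end OllivierGraph
end

section
/- (Liouville property via coupling) Let G=(V,q) be a reversible stochastically complete graph and let G̃=(V×V,q̃) be a coupling graph of G with heat semigroup P̃_t. Suppose P̃_t 1_W → 0 pointwise as t → ∞, where W := V×V ∖ {(x,x) : x∈V}. Then every bounded function f:V→ℝ with Δf = 0 is constant. -/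
open scoped BigOperators Classical

namespace OllivierGraph

variable {V : Type*}

/-!
The function `g (a, b) = f a - f b` is bounded and harmonic for the coupling graph and vanishes
on the diagonal, so if the coupled chain started at `(x, y)` keeps `g` constant in expectation,
then `|f x - f y| ≤ 2 ‖f‖_∞ P̃_t 1_W (x, y) → 0`. To make this rigorous, stop the coupled chain
when it leaves a finite box `A₁ × A₂`: its semigroup is then a matrix exponential that fixes
harmonic functions exactly, and a comparison principle bounds its exit probability from the box
by the sum of the exit probabilities of the two marginal chains from `A₁` and `A₂`. Stochastic
completeness of the base graph makes those arbitrarily small.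
-/

open scoped Matrix

section Metzler

open NormedSpace

attribute [local instance] Matrix.linftyOpNormedRing Matrix.linftyOpNormedAlgebra

variable {n : Type*} [Fintype n] [DecidableEq n]

theorem exp_apply_nonneg {N : Matrix n n ℝ} (hN : ∀ i j, 0 ≤ N i j) (i j : n) :
    0 ≤ exp N i j := by
  refine ((exp_series_hasSum_exp' (𝕂 := ℝ) N).map (Matrix.entryAddMonoidHom ℝ i j)
    (continuous_id.matrix_elem i j)).nonneg fun k => ?_
  simp only [Function.comp_apply, Matrix.entryAddMonoidHom_apply, Matrix.smul_apply, smul_eq_mul]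
  exact mul_nonneg (by positivity) (Matrix.pow_apply_nonneg hN k i j)

theorem exp_smul_apply_nonneg_s16 {M : Matrix n n ℝ} (hM : ∀ i j, i ≠ j → 0 ≤ M i j) {t : ℝ}
    (ht : 0 ≤ t) (i j : n) : 0 ≤ exp (t • M) i j := by
  -- shift `M` by a multiple of the identity to make all its entries nonnegative
  set c := ∑ k, |M k k|
  have hN : ∀ i j, 0 ≤ (t • (M + c • 1)) i j := by
    intro i j
    refine mul_nonneg ht ?_
    rcases eq_or_ne i j with rfl | hij
    · have := Finset.single_le_sum (fun k _ => abs_nonneg (M k k)) (Finset.mem_univ i)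
      simp only [Matrix.add_apply, Matrix.smul_apply, Matrix.one_apply_eq, smul_eq_mul, mul_one]
      linarith [neg_abs_le (M i i)]
    · simpa [Matrix.one_apply_ne hij] using hM i j hij
  have hsplit : t • M = t • (M + c • 1) + (-(t * c)) • (1 : Matrix n n ℝ) := by
    rw [smul_add, smul_smul, add_assoc, ← add_smul]
    simp
  have hscalar : exp ((-(t * c)) • (1 : Matrix n n ℝ)) = Real.exp (-(t * c)) • 1 := by
    rw [← Matrix.diagonal_one, ← Matrix.diagonal_smul, Matrix.exp_diagonal, ← Matrix.diagonal_smul]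
    congr 1
    ext
    simp [Real.exp_eq_exp_ℝ]
  rw [hsplit, Matrix.exp_add_of_commute _ _ ((Commute.one_right _).smul_right _), hscalar,
    Matrix.mul_smul, Matrix.mul_one, Matrix.smul_apply, smul_eq_mul]
  exact mul_nonneg (Real.exp_pos _).le (exp_apply_nonneg hN i j)

theorem hasDerivAt_exp_smul_apply (M : Matrix n n ℝ) (t : ℝ) (i j : n) :
    HasDerivAt (fun s : ℝ => exp (s • M) i j) ((M * exp (t • M)) i j) t :=
  hasDerivAt_pi.1 (hasDerivAt_pi.1 (hasDerivAt_exp_smul_const' M t) i) j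

omit [DecidableEq n] in
theorem mulVec_mono_of_nonneg {E : Matrix n n ℝ} (hE : ∀ i j, 0 ≤ E i j) {v w : n → ℝ}
    (hvw : v ≤ w) : E *ᵥ v ≤ E *ᵥ w :=
  fun i => Finset.sum_le_sum fun j _ => mul_le_mul_of_nonneg_left (hvw j) (hE i j)

/-- Comparison principle: a supersolution of `Φ' = M Φ` dominates the solution
`s ↦ exp (s • M) *ᵥ v` that starts below it. -/
theorem exp_smul_mulVec_le {M : Matrix n n ℝ} (hM : ∀ i j, i ≠ j → 0 ≤ M i j) {t : ℝ}
    (ht : 0 ≤ t) {Φ Φ' : ℝ → n → ℝ} (hΦ : ∀ s i, HasDerivAt (fun s => Φ s i) (Φ' s i) s)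
    (hsuper : ∀ s ∈ Set.Icc 0 t, M *ᵥ Φ s ≤ Φ' s) {v : n → ℝ} (hv : v ≤ Φ 0) :
    exp (t • M) *ᵥ v ≤ Φ t := by
  intro i
  set g : ℝ → ℝ := fun s => (exp ((t - s) • M) *ᵥ Φ s) i
  have hg : ∀ s, HasDerivAt g ((exp ((t - s) • M) *ᵥ (Φ' s - M *ᵥ Φ s)) i) s := by
    intro s
    refine (HasDerivAt.fun_sum fun j _ =>
      ((hasDerivAt_exp_smul_apply M (t - s) i j).comp_const_sub t s).mul (hΦ s j)).congr_deriv ?_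
    have hcomm : M * exp ((t - s) • M) = exp ((t - s) • M) * M :=
      ((Commute.refl M).smul_right _).exp_right.eq
    rw [Matrix.mulVec_sub, Matrix.mulVec_mulVec, ← hcomm]
    simp only [Pi.sub_apply, Matrix.mulVec, dotProduct, ← Finset.sum_sub_distrib]
    exact Finset.sum_congr rfl fun j _ => by ring
  have hmono : MonotoneOn g (Set.Icc 0 t) := by
    refine monotoneOn_of_deriv_nonneg (convex_Icc 0 t)
      (fun s _ => (hg s).continuousAt.continuousWithinAt)
      (fun s _ => (hg s).differentiableAt.differentiableWithinAt) fun s hs => ?_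
    rw [interior_Icc] at hs
    rw [(hg s).deriv]
    simpa using mulVec_mono_of_nonneg (exp_smul_apply_nonneg_s16 hM (by linarith [hs.2]))
      (sub_nonneg.2 (hsuper s (Set.Ioo_subset_Icc_self hs))) i
  calc (exp (t • M) *ᵥ v) i ≤ g 0 := by
        simpa [g] using mulVec_mono_of_nonneg (exp_smul_apply_nonneg_s16 hM ht) hv i
    _ ≤ g t := hmono (Set.left_mem_Icc.2 ht) (Set.right_mem_Icc.2 ht) ht
    _ = Φ t i := by simp [g]

end Metzler

section Laplacian

variable {q : V → V → ℝ}

theorem lap_eq_sum_of_support_subset {s : Finset V} {x : V} (hs : ∀ y, q x y ≠ 0 → y ∈ s)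
    (u : V → ℝ) : lap q u x = ∑ y ∈ s, q x y * (u y - u x) :=
  tsum_eq_sum fun y hy => by rw [not_not.1 (mt (hs y) hy), zero_mul]

theorem IsGraph.mem_support (hq : IsGraph q) {x y : V} (h : q x y ≠ 0) :
    y ∈ (hq.2 x).toFinset :=
  (hq.2 x).mem_toFinset.2 ((hq.1 x y).lt_of_ne' h)

theorem lap_add (hq : IsGraph q) (u v : V → ℝ) (x : V) :
    lap q (fun z => u z + v z) x = lap q u x + lap q v x := by
  simp only [lap_eq_sum_of_support_subset (fun _ => hq.mem_support), ← Finset.sum_add_distrib]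
  exact Finset.sum_congr rfl fun y _ => by ring

theorem lap_sub (hq : IsGraph q) (u v : V → ℝ) (x : V) :
    lap q (fun z => u z - v z) x = lap q u x - lap q v x := by
  simp only [lap_eq_sum_of_support_subset (fun _ => hq.mem_support), ← Finset.sum_sub_distrib]
  exact Finset.sum_congr rfl fun y _ => by ring

theorem IsCouplingGraph.lap_fst_add_snd {qt : V × V → V × V → ℝ} (hcpl : IsCouplingGraph q qt)
    (u v : V → ℝ) (p : V × V) :
    lap qt (fun r => u r.1 + v r.2) p = lap q u p.1 + lap q v p.2 := by
  rw [lap_add hcpl.1 (fun r => u r.1) (fun r => v r.2), (hcpl.2 u).1, (hcpl.2 v).2]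

theorem IsCouplingGraph.lap_fst_sub_snd {qt : V × V → V × V → ℝ} (hcpl : IsCouplingGraph q qt)
    (u v : V → ℝ) (p : V × V) :
    lap qt (fun r => u r.1 - v r.2) p = lap q u p.1 - lap q v p.2 := by
  rw [lap_sub hcpl.1 (fun r => u r.1) (fun r => v r.2), (hcpl.2 u).1, (hcpl.2 v).2]

def Encloses (q : V → V → ℝ) (S B : Finset V) : Prop :=
  S ⊆ B ∧ ∀ x ∈ S, ∀ y, q x y ≠ 0 → y ∈ B

theorem exists_encloses (hq : IsGraph q) (S : Finset V) (x : V) :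
    ∃ B, x ∈ B ∧ Encloses q S B :=
  ⟨insert x (S ∪ S.biUnion fun z => (hq.2 z).toFinset), Finset.mem_insert_self x _,
    Finset.subset_union_left.trans (Finset.subset_insert x _), fun z hz _ hzy =>
      Finset.mem_insert_of_mem (Finset.mem_union_right _
        (Finset.mem_biUnion.2 ⟨z, hz, hq.mem_support hzy⟩))⟩

end Laplacian

section StoppedHeat

open NormedSpace

attribute [local instance] Matrix.linftyOpNormedRing Matrix.linftyOpNormedAlgebra

variable {q : V → V → ℝ} {S : Finset V}

/-- `heatS` without the cut-off `f · 1_S`: the heat semigroup of the chain that is stopped when it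
leaves `S`. -/
noncomputable def stoppedHeat (q : V → V → ℝ) (S : Finset V) (t : ℝ) (u : V → ℝ) (x : V) : ℝ :=
  ∑' k : ℕ, t ^ k / (Nat.factorial k : ℝ) * ((lapS q S)^[k] u) x

theorem heatS_eq_stoppedHeat (t : ℝ) (f : V → ℝ) (x : V) :
    heatS q S t f x = stoppedHeat q S t (fun v => if v ∈ S then f v else 0) x :=
  rfl

theorem stoppedHeat_of_harmonic {u : V → ℝ} (hu : ∀ z, lap q u z = 0) (t : ℝ) (x : V) :
    stoppedHeat q S t u x = u x := by
  have hfix : lapS q S u = 0 := funext fun z => by simp [lapS, hu z]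
  have hzero : lapS q S 0 = 0 := funext fun z => by simp [lapS, lap]
  refine (tsum_eq_single 0 fun k hk => ?_).trans (by simp)
  obtain ⟨m, rfl⟩ := Nat.exists_eq_succ_of_ne_zero hk
  rw [Function.iterate_succ_apply, hfix, Function.iterate_fixed hzero]
  simp

theorem stoppedHeat_const (t c : ℝ) (x : V) : stoppedHeat q S t (fun _ => c) x = c :=
  stoppedHeat_of_harmonic (fun _ => by simp [lap]) t x

theorem stoppedHeat_zero (u : V → ℝ) (x : V) : stoppedHeat q S 0 u x = u x :=
  (tsum_eq_single 0 fun k hk => by simp [zero_pow hk]).trans (by simp)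

noncomputable def lapSMatrix (q : V → V → ℝ) (S B : Finset V) : Matrix B B ℝ :=
  Matrix.of fun x y => if (x : V) ∈ S then q x y - if x = y then ∑ z : B, q x z else 0 else 0

theorem lapSMatrix_apply_nonneg (hq : IsGraph q) (S B : Finset V) :
    ∀ i j : B, i ≠ j → 0 ≤ lapSMatrix q S B i j := by
  intro i j hij
  simp only [lapSMatrix, Matrix.of_apply, if_neg hij, sub_zero]
  split_ifs
  exacts [hq.1 _ _, le_rfl]

variable {B : Finset V}

theorem lapS_restrict_eq_mulVec (hB : Encloses q S B) (u : V → ℝ) :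
    (fun r : B => lapS q S u r) = lapSMatrix q S B *ᵥ fun r : B => u r := by
  funext ⟨x, hx⟩
  simp only [lapS, Matrix.mulVec, dotProduct, lapSMatrix, Matrix.of_apply]
  split_ifs with hxS
  · rw [lap_eq_sum_of_support_subset (hB.2 x hxS), ← Finset.sum_coe_sort B]
    simp [sub_mul, mul_sub, Finset.sum_sub_distrib, Finset.sum_mul]
  · simp

theorem iterate_lapS_restrict_eq_pow_mulVec (hB : Encloses q S B) (k : ℕ) (u : V → ℝ) :
    (fun r : B => (lapS q S)^[k] u r) = lapSMatrix q S B ^ k *ᵥ fun r : B => u r := by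
  induction k with
  | zero => simp
  | succ k ih =>
    rw [Function.iterate_succ', Function.comp_def, lapS_restrict_eq_mulVec hB, ih,
      Matrix.mulVec_mulVec, pow_succ']

theorem stoppedHeat_restrict_eq_exp_mulVec (hB : Encloses q S B) (t : ℝ) (u : V → ℝ) :
    (fun r : B => stoppedHeat q S t u r) = exp (t • lapSMatrix q S B) *ᵥ fun r : B => u r := by
  funext r
  let g : Matrix B B ℝ →+ ℝ :=
    (Pi.evalAddMonoidHom _ r).comp (Matrix.mulVec.addMonoidHomLeft fun r : B => u r)
  have hg : Continuous g := (continuous_apply r).comp (continuous_id.matrix_mulVec continuous_const)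
  refine (((exp_series_hasSum_exp' (𝕂 := ℝ) (t • lapSMatrix q S B)).map g hg).congr_fun
    fun k => ?_).tsum_eq
  have hk := congrFun (iterate_lapS_restrict_eq_pow_mulVec hB k u) r
  simp only [Function.comp_apply, g, AddMonoidHom.comp_apply, Pi.evalAddMonoidHom_apply,
    Matrix.mulVec.addMonoidHomLeft_apply, smul_pow, smul_smul, Matrix.smul_mulVec,
    Pi.smul_apply, smul_eq_mul] at hk ⊢
  rw [hk]
  ring

theorem stoppedHeat_eq_exp_mulVec (hB : Encloses q S B) {x : V} (hx : x ∈ B) (t : ℝ)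
    (u : V → ℝ) :
    stoppedHeat q S t u x = (exp (t • lapSMatrix q S B) *ᵥ fun r : B => u r) ⟨x, hx⟩ :=
  congrFun (stoppedHeat_restrict_eq_exp_mulVec hB t u) ⟨x, hx⟩

theorem exists_stoppedHeat_eq_exp_mulVec (hq : IsGraph q) (S : Finset V) (x : V) :
    ∃ (B : Finset V) (hx : x ∈ B), Encloses q S B ∧ ∀ t u,
      stoppedHeat q S t u x = (exp (t • lapSMatrix q S B) *ᵥ fun r : B => u r) ⟨x, hx⟩ := by
  obtain ⟨B, hx, hB⟩ := exists_encloses hq S x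
  exact ⟨B, hx, hB, stoppedHeat_eq_exp_mulVec hB hx⟩

theorem stoppedHeat_add (hq : IsGraph q) (t : ℝ) (u v : V → ℝ) (x : V) :
    stoppedHeat q S t (fun z => u z + v z) x = stoppedHeat q S t u x + stoppedHeat q S t v x := by
  obtain ⟨B, hx, -, h⟩ := exists_stoppedHeat_eq_exp_mulVec hq S x
  simp only [h, ← Pi.add_apply, ← Matrix.mulVec_add]
  rfl

theorem stoppedHeat_const_mul (hq : IsGraph q) (t c : ℝ) (u : V → ℝ) (x : V) :
    stoppedHeat q S t (fun z => c * u z) x = c * stoppedHeat q S t u x := by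
  obtain ⟨B, hx, -, h⟩ := exists_stoppedHeat_eq_exp_mulVec hq S x
  rw [h, h, show (fun r : B => c * u r) = c • fun r : B => u r from rfl, Matrix.mulVec_smul]
  rfl

theorem stoppedHeat_mono (hq : IsGraph q) {t : ℝ} (ht : 0 ≤ t) {u v : V → ℝ} (huv : u ≤ v)
    (x : V) : stoppedHeat q S t u x ≤ stoppedHeat q S t v x := by
  obtain ⟨B, hx, -, h⟩ := exists_stoppedHeat_eq_exp_mulVec hq S x
  rw [h, h]
  exact mulVec_mono_of_nonneg (exp_smul_apply_nonneg_s16 (lapSMatrix_apply_nonneg hq S B) ht)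
    (fun r => huv r) _

theorem stoppedHeat_nonneg (hq : IsGraph q) {t : ℝ} (ht : 0 ≤ t) {u : V → ℝ} (hu : 0 ≤ u)
    (x : V) : 0 ≤ stoppedHeat q S t u x :=
  (stoppedHeat_const t 0 x).symm.trans_le (stoppedHeat_mono hq ht hu x)

theorem abs_stoppedHeat_le (hq : IsGraph q) {t : ℝ} (ht : 0 ≤ t) (u : V → ℝ) (x : V) :
    |stoppedHeat q S t u x| ≤ stoppedHeat q S t (fun z => |u z|) x := by
  have hneg := stoppedHeat_const_mul hq (S := S) t (-1) (fun z => |u z|) x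
  simp only [neg_one_mul] at hneg
  refine abs_le.2 ⟨?_, stoppedHeat_mono hq ht (fun z => le_abs_self (u z)) x⟩
  rw [← hneg]
  exact stoppedHeat_mono hq ht (fun z => neg_abs_le (u z)) x

theorem lapS_stoppedHeat (hq : IsGraph q) (t : ℝ) (u : V → ℝ) (x : V) :
    lapS q S (stoppedHeat q S t u) x = stoppedHeat q S t (lapS q S u) x := by
  obtain ⟨B, hx, hB, h⟩ := exists_stoppedHeat_eq_exp_mulVec hq S x
  have hcomm : lapSMatrix q S B * exp (t • lapSMatrix q S B)
      = exp (t • lapSMatrix q S B) * lapSMatrix q S B :=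
    ((Commute.refl _).smul_right t).exp_right.eq
  rw [h, congrFun (lapS_restrict_eq_mulVec hB _) ⟨x, hx⟩, lapS_restrict_eq_mulVec hB,
    stoppedHeat_restrict_eq_exp_mulVec hB, Matrix.mulVec_mulVec, Matrix.mulVec_mulVec, hcomm]

theorem hasDerivAt_stoppedHeat (hq : IsGraph q) (u : V → ℝ) (x : V) (t : ℝ) :
    HasDerivAt (fun s => stoppedHeat q S s u x) (lapS q S (stoppedHeat q S t u) x) t := by
  obtain ⟨B, hx, hB, h⟩ := exists_stoppedHeat_eq_exp_mulVec hq S x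
  simp only [h]
  rw [congrFun (lapS_restrict_eq_mulVec hB _) ⟨x, hx⟩, stoppedHeat_restrict_eq_exp_mulVec hB,
    Matrix.mulVec_mulVec]
  exact HasDerivAt.fun_sum fun r _ =>
    (hasDerivAt_exp_smul_apply (lapSMatrix q S B) t ⟨x, hx⟩ r).mul_const (u r)

end StoppedHeat

section ExitProbability

variable {q : V → V → ℝ}

noncomputable def exitProb (q : V → V → ℝ) (S : Finset V) (t : ℝ) (x : V) : ℝ :=
  stoppedHeat q S t (fun z => if z ∈ S then 0 else 1) x

theorem heatS_le_heatPos (hq : IsGraph q) {t : ℝ} (ht : 0 ≤ t) {u : V → ℝ} (hu : u ≤ 1)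
    (S : Finset V) (x : V) : heatS q S t u x ≤ heatPos q t u x := by
  have hle : ∀ T : Finset V, heatS q T t u x ≤ 1 := fun T =>
    (stoppedHeat_mono hq ht (fun z => by split_ifs; exacts [hu z, zero_le_one]) x).trans_eq
      (stoppedHeat_const t 1 x)
  exact le_ciSup ⟨1, Set.forall_mem_range.2 hle⟩ S

theorem heat_eq_heatPos (t : ℝ) {u : V → ℝ} (hu : 0 ≤ u) (x : V) :
    heat q t u x = heatPos q t u x := by
  have hpos : (fun v => max (u v) 0) = u := funext fun v => max_eq_left (hu v)
  have hneg : (fun v => max (-u v) 0) = fun _ => 0 :=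
    funext fun v => max_eq_right (neg_nonpos.2 (hu v))
  have hzero : heatPos q t (fun _ => 0) x = 0 := by
    simp [heatPos, heatS_eq_stoppedHeat, stoppedHeat_const]
  rw [heat, hpos, hneg, hzero, sub_zero]

theorem exitProb_add_heatS_one (hq : IsGraph q) (S : Finset V) (t : ℝ) (x : V) :
    exitProb q S t x + heatS q S t (fun _ => 1) x = 1 := by
  have hsum :
      (fun z => (if z ∈ S then 0 else 1) + if z ∈ S then 1 else 0) = fun _ : V => (1 : ℝ) :=
    funext fun z => by split_ifs <;> norm_num
  rw [exitProb, heatS_eq_stoppedHeat, ← stoppedHeat_add hq, hsum, stoppedHeat_const]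

theorem exitProb_nonneg (hq : IsGraph q) (S : Finset V) {t : ℝ} (ht : 0 ≤ t) (x : V) :
    0 ≤ exitProb q S t x :=
  stoppedHeat_nonneg hq ht (fun z => by dsimp only; split_ifs <;> norm_num) x

theorem exists_exitProb_lt (hq : IsGraph q) (hsc : StochasticallyComplete q) {t : ℝ}
    (ht : 0 ≤ t) (x : V) {δ : ℝ} (hδ : 0 < δ) : ∃ A, exitProb q A t x < δ := by
  have hone : heatPos q t (fun _ => 1) x = 1 := by
    rw [← heat_eq_heatPos t (fun _ => zero_le_one), hsc t ht x]
  have hlt : 1 - δ < ⨆ S : Finset V, heatS q S t (fun _ => 1) x := by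
    change 1 - δ < heatPos q t (fun _ => 1) x
    linarith
  obtain ⟨A, hA⟩ := exists_lt_of_lt_ciSup hlt
  exact ⟨A, by linarith [exitProb_add_heatS_one hq A t x]⟩

theorem exitProb_zero (S : Finset V) (x : V) : exitProb q S 0 x = if x ∈ S then 0 else 1 :=
  stoppedHeat_zero _ x

theorem hasDerivAt_exitProb (hq : IsGraph q) (S : Finset V) (x : V) (t : ℝ) :
    HasDerivAt (fun s => exitProb q S s x) (lapS q S (exitProb q S t) x) t :=
  hasDerivAt_stoppedHeat hq _ x t

theorem lapS_exitProb_nonneg (hq : IsGraph q) (S : Finset V) {t : ℝ} (ht : 0 ≤ t) (x : V) :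
    0 ≤ lapS q S (exitProb q S t) x := by
  change 0 ≤ lapS q S (stoppedHeat q S t fun z => if z ∈ S then 0 else 1) x
  rw [lapS_stoppedHeat hq]
  refine stoppedHeat_nonneg hq ht (fun z => ?_) x
  simp only [lapS, lap, Pi.zero_apply]
  split_ifs with hz
  · refine tsum_nonneg fun y => mul_nonneg (hq.1 z y) ?_
    split_ifs <;> norm_num
  · exact le_rfl

end ExitProbability

section Coupling

variable {q : V → V → ℝ}

theorem exitProb_prod_le {qt : V × V → V × V → ℝ} (hq : IsGraph q) (hcpl : IsCouplingGraph q qt)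
    (A₁ A₂ : Finset V) {t : ℝ} (ht : 0 ≤ t) (x y : V) :
    exitProb qt (A₁ ×ˢ A₂) t (x, y) ≤ exitProb q A₁ t x + exitProb q A₂ t y := by
  obtain ⟨B, hxy, hB, h⟩ := exists_stoppedHeat_eq_exp_mulVec hcpl.1 (A₁ ×ˢ A₂) (x, y)
  -- `(s, a, b) ↦ exitProb q A₁ s a + exitProb q A₂ s b` is a supersolution of the stopped
  -- coupled heat equation: with equality inside the box, by the coupling property
  let F : ℝ → V × V → ℝ := fun s p => exitProb q A₁ s p.1 + exitProb q A₂ s p.2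
  let F' : ℝ → V × V → ℝ := fun s p =>
    lapS q A₁ (exitProb q A₁ s) p.1 + lapS q A₂ (exitProb q A₂ s) p.2
  have hF : ∀ s (r : B), HasDerivAt (fun s => F s r) (F' s r) s := fun s r =>
    (hasDerivAt_exitProb hq A₁ _ s).add (hasDerivAt_exitProb hq A₂ _ s)
  have hsuper : ∀ s ∈ Set.Icc 0 t,
      lapSMatrix qt (A₁ ×ˢ A₂) B *ᵥ (fun r : B => F s r) ≤ fun r : B => F' s r := by
    intro s hs r
    rw [← lapS_restrict_eq_mulVec hB]
    by_cases hr : (r : V × V) ∈ A₁ ×ˢ A₂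
    · obtain ⟨h₁, h₂⟩ := Finset.mem_product.1 hr
      simp only [lapS, if_pos hr, if_pos h₁, if_pos h₂, F, F']
      exact (hcpl.lap_fst_add_snd _ _ _).le
    · simp only [lapS, if_neg hr]
      exact add_nonneg (lapS_exitProb_nonneg hq A₁ hs.1 _) (lapS_exitProb_nonneg hq A₂ hs.1 _)
  have hstart :
      (fun r : B => if (r : V × V) ∈ A₁ ×ˢ A₂ then (0 : ℝ) else 1) ≤ fun r : B => F 0 r := by
    intro r
    simp only [F, exitProb_zero, Finset.mem_product]
    split_ifs <;> simp_all
  have := exp_smul_mulVec_le (lapSMatrix_apply_nonneg hcpl.1 _ B) ht hF hsuper hstart ⟨_, hxy⟩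
  -- `convert` only reconciles two `DecidableEq B` instances
  exact (h t _).trans_le (by convert this)

theorem exists_exitProb_lt_of_coupling {qt : V × V → V × V → ℝ} (hq : IsGraph q)
    (hsc : StochasticallyComplete q) (hcpl : IsCouplingGraph q qt) {t : ℝ} (ht : 0 ≤ t)
    (x y : V) {δ : ℝ} (hδ : 0 < δ) : ∃ S, exitProb qt S t (x, y) < δ := by
  obtain ⟨A₁, h₁⟩ := exists_exitProb_lt hq hsc ht x (half_pos hδ)
  obtain ⟨A₂, h₂⟩ := exists_exitProb_lt hq hsc ht y (half_pos hδ)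
  exact ⟨A₁ ×ˢ A₂, by linarith [exitProb_prod_le hq hcpl A₁ A₂ ht x y]⟩

end Coupling

theorem abs_le_heatPos_add_exitProb {q : V → V → ℝ} (hq : IsGraph q) {g w : V → ℝ}
    (hg : ∀ z, lap q g z = 0) (hw : w ≤ 1) {C : ℝ} (hC : 0 ≤ C)
    (hgw : ∀ z, |g z| ≤ C * w z) (S : Finset V) {t : ℝ} (ht : 0 ≤ t) (x : V) :
    |g x| ≤ C * (heatPos q t w x + exitProb q S t x) := by
  have hsplit : (fun z => |g z|) ≤
      fun z => C * ((if z ∈ S then w z else 0) + if z ∈ S then 0 else 1) := by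
    intro z
    dsimp only
    split_ifs
    · simpa using hgw z
    · simpa using (hgw z).trans (mul_le_of_le_one_right hC (hw z))
  calc |g x| = |stoppedHeat q S t g x| := by rw [stoppedHeat_of_harmonic hg]
    _ ≤ stoppedHeat q S t (fun z => |g z|) x := abs_stoppedHeat_le hq ht g x
    _ ≤ C * (heatS q S t w x + exitProb q S t x) := by
      rw [heatS_eq_stoppedHeat, exitProb, ← stoppedHeat_add hq, ← stoppedHeat_const_mul hq]
      exact stoppedHeat_mono hq ht hsplit x
    _ ≤ C * (heatPos q t w x + exitProb q S t x) := by
      gcongr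
      exact heatS_le_heatPos hq ht hw S x

theorem abs_sub_le_heat_offDiag {q : V → V → ℝ} {qt : V × V → V × V → ℝ} (hq : IsGraph q)
    (hsc : StochasticallyComplete q) (hcpl : IsCouplingGraph q qt) {f : V → ℝ}
    (hf : ∀ x, lap q f x = 0) {C : ℝ} (hC : ∀ x, |f x| ≤ C) {t : ℝ} (ht : 0 ≤ t) (x y : V) :
    |f x - f y| ≤ 2 * C * heat qt t (fun r => if r.1 ≠ r.2 then 1 else 0) (x, y) := by
  set w : V × V → ℝ := fun r => if r.1 ≠ r.2 then 1 else 0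
  have hw₀ : 0 ≤ w := fun r => by dsimp only [w]; split_ifs <;> norm_num
  have hw₁ : w ≤ 1 := fun r => by dsimp only [w]; split_ifs <;> norm_num
  have hC₀ : 0 ≤ 2 * C := by linarith [(abs_nonneg (f x)).trans (hC x)]
  have hgw : ∀ r : V × V, |f r.1 - f r.2| ≤ 2 * C * w r := fun r => by
    by_cases hr : r.1 = r.2
    · simp [w, hr]
    · simpa [w, hr, two_mul] using (abs_sub _ _).trans (add_le_add (hC r.1) (hC r.2))
  have hharm : ∀ p, lap qt (fun r => f r.1 - f r.2) p = 0 := fun p => by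
    rw [hcpl.lap_fst_sub_snd, hf, hf, sub_zero]
  rw [heat_eq_heatPos t hw₀]
  refine le_of_forall_pos_le_add fun ε hε => ?_
  obtain ⟨S, hS⟩ := exists_exitProb_lt_of_coupling hq hsc hcpl ht x y
    (div_pos hε (by linarith : 0 < 2 * C + 1))
  have hexit : 2 * C * exitProb qt S t (x, y) ≤ ε :=
    calc 2 * C * exitProb qt S t (x, y) ≤ (2 * C + 1) * exitProb qt S t (x, y) :=
          mul_le_mul_of_nonneg_right (by linarith) (exitProb_nonneg hcpl.1 S ht (x, y))
      _ ≤ ε := ((lt_div_iff₀' (by linarith)).1 hS).le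
  linarith [abs_le_heatPos_add_exitProb hcpl.1 hharm hw₁ hC₀ hgw S ht (x, y)]

theorem liouville_via_coupling_general
    {V : Type*} (q : V → V → ℝ) (qt : V × V → V × V → ℝ)
    (hg : IsGraph q) (hsc : StochasticallyComplete q)
    (hcpl : IsCouplingGraph q qt)
    (hW : ∀ p : V × V,
      Filter.Tendsto (fun t => heat qt t (fun r => if r.1 ≠ r.2 then (1 : ℝ) else 0) p)
        Filter.atTop (nhds 0))
    (f : V → ℝ) (hf : IsBoundedFun f) (hharm : ∀ x, lap q f x = 0) :
    ∀ x y : V, f x = f y := by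
  intro x y
  obtain ⟨C, hC⟩ := hf
  have hlim : Filter.Tendsto
      (fun t => 2 * C * heat qt t (fun r => if r.1 ≠ r.2 then (1 : ℝ) else 0) (x, y))
      Filter.atTop (nhds 0) := by
    simpa using (hW (x, y)).const_mul (2 * C)
  have hle : |f x - f y| ≤ 0 := ge_of_tendsto hlim <| Filter.eventually_atTop.2
    ⟨0, fun t ht => abs_sub_le_heat_offDiag hg hsc hcpl hharm hC ht x y⟩
  exact sub_eq_zero.1 (abs_nonpos_iff.1 hle)

theorem liouville_via_coupling
    {V : Type*} [Countable V] (q : V → V → ℝ) (qt : V × V → V × V → ℝ)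
    (hg : IsGraph q) (hrev : IsReversible q) (hsc : StochasticallyComplete q)
    (hcpl : IsCouplingGraph q qt)
    (hW : ∀ p : V × V,
      Filter.Tendsto (fun t => heat qt t (fun r => if r.1 ≠ r.2 then (1 : ℝ) else 0) p)
        Filter.atTop (nhds 0))
    (f : V → ℝ) (hf : IsBoundedFun f) (hharm : ∀ x, lap q f x = 0) :
    ∀ x y : V, f x = f y :=
  liouville_via_coupling_general q qt hg hsc hcpl hW f hf hharm

end OllivierGraph
end
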